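/- arXiv:1711.05545 — 8 statements merged into one kernel-verified Lean document; each statement's English description precedes it below -/
import Mathlib

section
/- Let G be a finite group and let M and N be finite-dimensional modules over the group algebra ℂ[G] (the monoid algebra of G over ℂ). Then every ℂ[G]-linear map M → N is zero if and only if every ℂ-linear map M → N commuting with the action on M and N of every element of the center Z(ℂ[G]) of ℂ[G] is zero. -/
/-!
Over a semisimple ring `R`, every two-sided ideal is generated by a central idempotent: a left
generator `e` is central because the corner `(1 - e) R e` squares to zero, and semisimple rings
have no nonzero square-zero left ideals. If there is no nonzero map `M → N`, then
`Ann M + Ann N = R`, since a simple left ideal outside this sum would map nontrivially into both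
`M` and `N`, and since `M` is semisimple such a pair extends to a nonzero map `M → N`. The central
idempotent generating `Ann N` then acts as the identity on `M` and as zero on `N`, so every
linear map commuting with it vanishes. By Maschke's theorem this applies to `R = ℂ[G]`.
-/

namespace IsSemisimpleRing

variable {R : Type*} [Ring R] [IsSemisimpleRing R]

theorem eq_zero_of_forall_mul_mul_eq_zero {x : R} (h : ∀ s, x * s * x = 0) : x = 0 := by
  obtain ⟨f, hf, hspan⟩ := ideal_eq_span_idempotent (Ideal.span {x})
  obtain ⟨a, rfl⟩ : ∃ a, a * f = x :=
    Ideal.mem_span_singleton'.1 (hspan ▸ Ideal.mem_span_singleton_self x)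
  obtain ⟨b, hb⟩ : ∃ b, b * (a * f) = f :=
    Ideal.mem_span_singleton'.1 (hspan ▸ Ideal.mem_span_singleton_self f)
  have hf0 : f = 0 := by
    rw [← hf.eq, ← hb, mul_assoc, ← mul_assoc (a * f), h, mul_zero]
  rw [hf0, mul_zero]

theorem ideal_eq_span_central_idempotent (I : Ideal R) [I.IsTwoSided] :
    ∃ e ∈ Subring.center R, IsIdempotentElem e ∧ I = Ideal.span {e} := by
  obtain ⟨e, he, rfl⟩ := ideal_eq_span_idempotent I
  refine ⟨e, Subring.mem_center_iff.2 fun r => ?_, he, rfl⟩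
  have mul_idem : ∀ x ∈ Ideal.span {e}, x * e = x := fun x hx => by
    obtain ⟨a, rfl⟩ := Ideal.mem_span_singleton'.1 hx
    rw [mul_assoc, he.eq]
  have left : ∀ s, e * s * e = e * s := fun s =>
    mul_idem _ (Ideal.mul_mem_right s _ (Ideal.mem_span_singleton_self e))
  have right : (1 - e) * r * e = 0 := eq_zero_of_forall_mul_mul_eq_zero fun s => by
    have : e * s * (1 - e) = 0 := by rw [mul_sub, mul_one, left, sub_self]
    calc (1 - e) * r * e * s * ((1 - e) * r * e)
        = (1 - e) * r * (e * s * (1 - e)) * r * e := by noncomm_ring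
      _ = 0 := by rw [this, mul_zero, zero_mul, zero_mul]
  rw [sub_mul, one_mul, sub_mul, sub_eq_zero, left] at right
  exact right

end IsSemisimpleRing

section

variable {R : Type*} [Ring R] {M N : Type*} [AddCommGroup M] [AddCommGroup N]
  [Module R M] [Module R N]

theorem Submodule.exists_ne_zero_of_not_le_annihilator {S : Submodule R R}
    (hS : ¬ S ≤ Module.annihilator R M) : ∃ f : S →ₗ[R] M, f ≠ 0 := by
  obtain ⟨x, hxS, hx⟩ := Set.not_subset.1 hS
  obtain ⟨m, hm⟩ := not_forall.1 (mt Module.mem_annihilator.2 hx)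
  exact ⟨LinearMap.toSpanSingleton R M m ∘ₗ S.subtype,
    fun h => hm (by simpa using LinearMap.congr_fun h ⟨x, hxS⟩)⟩

theorem LinearMap.exists_ne_zero_of_isSimpleModule [IsSemisimpleModule R M] {S : Type*}
    [AddCommGroup S] [Module R S] [IsSimpleModule R S] {f : S →ₗ[R] M} {g : S →ₗ[R] N}
    (hf : f ≠ 0) (hg : g ≠ 0) : ∃ φ : M →ₗ[R] N, φ ≠ 0 := by
  obtain ⟨φ, hφ⟩ := IsSemisimpleModule.extension_property f (injective_of_ne_zero hf) g
  exact ⟨φ, fun h => hg (by rw [← hφ, h, zero_comp])⟩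

namespace IsSemisimpleRing

variable [IsSemisimpleRing R]

theorem annihilator_sup_annihilator_eq_top (h : ∀ φ : M →ₗ[R] N, φ = 0) :
    Module.annihilator R M ⊔ Module.annihilator R N = ⊤ := by
  by_contra hne
  obtain ⟨C, hC⟩ := exists_isCompl (Module.annihilator R M ⊔ Module.annihilator R N)
  obtain ⟨S, hSC, hS⟩ := (IsSemisimpleModule.eq_bot_or_exists_simple_le C).resolve_left
    fun hC0 => hne (eq_top_of_isCompl_bot (hC0 ▸ hC))
  have not_le : ∀ I ≤ Module.annihilator R M ⊔ Module.annihilator R N, ¬ S ≤ I :=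
    fun I hI hSI => (isSimpleModule_iff_isAtom.1 hS).1 <|
      (hC.disjoint.mono_left (hSI.trans hI)).eq_bot_of_le hSC
  obtain ⟨f, hf⟩ := Submodule.exists_ne_zero_of_not_le_annihilator (not_le _ le_sup_left)
  obtain ⟨g, hg⟩ := Submodule.exists_ne_zero_of_not_le_annihilator (not_le _ le_sup_right)
  obtain ⟨φ, hφ⟩ := LinearMap.exists_ne_zero_of_isSimpleModule hf hg
  exact hφ (h φ)

theorem exists_mem_center_smul_eq_self_and_smul_eq_zero (h : ∀ φ : M →ₗ[R] N, φ = 0) :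
    ∃ z ∈ Subring.center R, (∀ m : M, z • m = m) ∧ ∀ n : N, z • n = 0 := by
  obtain ⟨a, ha, b, hb, hab⟩ := Submodule.mem_sup.1
    ((annihilator_sup_annihilator_eq_top h).symm ▸ Submodule.mem_top : (1 : R) ∈ _)
  obtain ⟨e, he, he_idem, hspan⟩ := ideal_eq_span_central_idempotent (Module.annihilator R N)
  refine ⟨e, he, fun m => ?_, Module.mem_annihilator.1 (hspan ▸ Ideal.mem_span_singleton_self e)⟩
  have hbm : b • m = m := by
    nth_rw 2 [← one_smul R m]
    rw [← hab, add_smul, Module.mem_annihilator.1 ha, zero_add]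
  obtain ⟨c, rfl⟩ := Ideal.mem_span_singleton'.1 (hspan ▸ hb)
  calc e • m = e • (c * e) • m := by rw [hbm]
    _ = (c * e) • m := by
      rw [smul_smul, ← mul_assoc, ← Subring.mem_center_iff.1 he, mul_assoc, he_idem.eq]
    _ = m := hbm

theorem forall_eq_zero_iff_forall_center_commuting_eq_zero {k : Type*} [CommRing k] [Algebra k R]
    [Module k M] [Module k N] [IsScalarTower k R M] [IsScalarTower k R N] :
    (∀ f : M →ₗ[R] N, f = 0) ↔
      ∀ f : M →ₗ[k] N, (∀ z ∈ Subalgebra.center k R, ∀ m : M, f (z • m) = z • f m) → f = 0 := by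
  refine ⟨fun h f hf => ?_, fun h f => ?_⟩
  · obtain ⟨z, hz, hzM, hzN⟩ := exists_mem_center_smul_eq_self_and_smul_eq_zero h
    ext m
    rw [← hzM m, hf z (Subalgebra.mem_center_iff.2 (Subring.mem_center_iff.1 hz)), hzN,
      LinearMap.zero_apply]
  · exact LinearMap.restrictScalars_injective k (h _ fun z _ m => f.map_smul z m)

end IsSemisimpleRing

end

theorem hom_zero_iff_center_hom_zero_general
    (G : Type*) [Group G] [Finite G]
    (M N : Type*) [AddCommGroup M] [AddCommGroup N]
    [Module (MonoidAlgebra ℂ G) M] [Module (MonoidAlgebra ℂ G) N]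
    [Module ℂ M] [Module ℂ N]
    [IsScalarTower ℂ (MonoidAlgebra ℂ G) M] [IsScalarTower ℂ (MonoidAlgebra ℂ G) N] :
    (∀ f : M →ₗ[MonoidAlgebra ℂ G] N, f = 0) ↔
      (∀ f : M →ₗ[ℂ] N,
        (∀ z ∈ Subalgebra.center ℂ (MonoidAlgebra ℂ G), ∀ m : M, f (z • m) = z • f m) →
          f = 0) :=
  IsSemisimpleRing.forall_eq_zero_iff_forall_center_commuting_eq_zero

/-- For finite-dimensional modules `M`, `N` over the group algebra `ℂ[G]` of a finite
group `G`, every `ℂ[G]`-linear map `M → N` is zero if and only if every `ℂ`-linear map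
`M → N` commuting with the action of every element of the center `Z(ℂ[G])` is zero. -/
theorem hom_zero_iff_center_hom_zero
    (G : Type*) [Group G] [Finite G]
    (M N : Type*) [AddCommGroup M] [AddCommGroup N]
    [Module (MonoidAlgebra ℂ G) M] [Module (MonoidAlgebra ℂ G) N]
    [Module ℂ M] [Module ℂ N]
    [IsScalarTower ℂ (MonoidAlgebra ℂ G) M] [IsScalarTower ℂ (MonoidAlgebra ℂ G) N]
    [Module.Finite (MonoidAlgebra ℂ G) M] [Module.Finite (MonoidAlgebra ℂ G) N] :
    (∀ f : M →ₗ[MonoidAlgebra ℂ G] N, f = 0) ↔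
      (∀ f : M →ₗ[ℂ] N,
        (∀ z ∈ Subalgebra.center ℂ (MonoidAlgebra ℂ G), ∀ m : M, f (z • m) = z • f m) →
          f = 0) :=
  hom_zero_iff_center_hom_zero_general G M N
end

section
/- A number field F is a CM-field if and only if there exists a ring automorphism ρ of F with ρ ≠ id such that for every ring homomorphism σ : F → ℂ one has σ ∘ ρ = conj ∘ σ, where conj denotes complex conjugation on ℂ. Moreover, such a ρ is necessarily an involution whose fixed field K is totally real with [F : K] = 2, and F is totally imaginary. -/
/-- A field is totally real if every ring homomorphism to `ℂ` has image in `ℝ`. -/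
def IsTotallyRealField (F : Type*) [Field F] : Prop :=
  ∀ σ : F →+* ℂ, ∀ x : F, ∃ r : ℝ, σ x = (r : ℂ)

/-- A field is totally imaginary if it admits no real embedding. -/
def IsTotallyImaginary (F : Type*) [Field F] : Prop :=
  IsEmpty (F →+* ℝ)

/-- A number field is a CM-field if it is totally imaginary and is a quadratic
extension of a totally real subfield. -/
def IsCMField (F : Type*) [Field F] : Prop :=
  IsTotallyImaginary F ∧
    ∃ K : Subfield F, IsTotallyRealField K ∧ Module.finrank K F = 2

/-- A CM-type on `F`: a set of embeddings `F → ℂ` containing exactly one of each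
conjugate pair. -/
def IsCMType (F : Type*) [Field F] (Φ : Set (F →+* ℂ)) : Prop :=
  ∀ σ : F →+* ℂ, Xor' (σ ∈ Φ) (σ ∈ (fun τ : F →+* ℂ => (starRingEnd ℂ).comp τ) '' Φ)
/-- The subfield of fixed points of a ring automorphism. -/
def fixedSubfield {F : Type*} [Field F] (ρ : F ≃+* F) : Subfield F where
  carrier := {x | ρ x = x}
  mul_mem' := by
    intro a b ha hb
    simp only [Set.mem_setOf_eq, map_mul] at *
    rw [ha, hb]
  one_mem' := by simp
  add_mem' := by
    intro a b ha hb
    simp only [Set.mem_setOf_eq, map_add] at *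
    rw [ha, hb]
  zero_mem' := by simp
  neg_mem' := by
    intro a ha
    simp only [Set.mem_setOf_eq, map_neg] at *
    rw [ha]
  inv_mem' := by
    intro a ha
    simp only [Set.mem_setOf_eq, map_inv₀] at *
    rw [ha]

theorem card2_pigeon {α : Type*} [Fintype α] (h : Fintype.card α = 2) {a b c : α}
    (hab : a ≠ b) (hac : a ≠ c) : b = c := by
  classical
  by_contra hbc
  have h3 : ({a, b, c} : Finset α).card = 3 := by
    rw [Finset.card_insert_of_notMem (by simp [hab, hac]),
      Finset.card_insert_of_notMem (by simp [hbc]), Finset.card_singleton]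
  have h4 := Finset.card_le_univ ({a, b, c} : Finset α)
  rw [h3] at h4
  omega

theorem quad_roots {z w b c : ℂ} (hz : z ^ 2 + b * z + c = 0) (hw : w ^ 2 + b * w + c = 0) :
    w = z ∨ w = -b - z := by
  have key : (w - z) * (w + z + b) = 0 := by linear_combination hw - hz
  rcases mul_eq_zero.mp key with h | h
  · left; exact sub_eq_zero.mp h
  · right; linear_combination h

def realHomOf {F : Type*} [Field F] (σ : F →+* ℂ) (h : ∀ x, (σ x).im = 0) : F →+* ℝ where
  toFun x := (σ x).re
  map_one' := by simp
  map_mul' a b := by simp [map_mul, Complex.mul_re, h]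
  map_zero' := by simp
  map_add' a b := by simp [map_add]

theorem cm_construct (F : Type*) [Field F] [NumberField F] (hcm : IsCMField F) :
    ∃ ρ : F ≃+* F, ρ ≠ RingEquiv.refl F ∧
      ∀ σ : F →+* ℂ, ∀ x : F, σ (ρ x) = (starRingEnd ℂ) (σ x) := by
  obtain ⟨himag, K, hKreal, hK2⟩ := hcm
  haveI : FiniteDimensional K F := FiniteDimensional.of_finrank_eq_succ hK2
  haveI : Algebra.IsAlgebraic ℚ F := Algebra.IsAlgebraic.of_finite ℚ F
  let σ₀ : F →+* ℂ := (IsAlgClosed.lift (R := ℚ) (S := F) (M := ℂ)).toRingHom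
  -- every embedding is real on K
  have hKconj : ∀ (σ : F →+* ℂ) (k : K), (starRingEnd ℂ) (σ ↑k) = σ ↑k := by
    intro σ k
    obtain ⟨r, hr⟩ := hKreal (σ.comp K.subtype) k
    have : σ ↑k = (r : ℂ) := hr
    rw [this, Complex.conj_ofReal]
  -- every element satisfies a monic quadratic over K
  have quad : ∀ y : F, ∃ b c : K, y ^ 2 + (↑b : F) * y + (↑c : F) = 0 := by
    intro y
    have hint : IsIntegral K y := Algebra.IsIntegral.isIntegral y
    have hmon := minpoly.monic hint
    have hdle : (minpoly K y).natDegree ≤ 2 := hK2 ▸ minpoly.natDegree_le y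
    have hdpos : 0 < (minpoly K y).natDegree := minpoly.natDegree_pos hint
    have haev : Polynomial.aeval y (minpoly K y) = 0 := minpoly.aeval K y
    rw [Polynomial.aeval_eq_sum_range] at haev
    interval_cases hd : (minpoly K y).natDegree
    · -- degree 1 : y = -c0
      have hc1 : (minpoly K y).coeff 1 = 1 := by
        have := hmon.leadingCoeff
        rwa [Polynomial.leadingCoeff, hd] at this
      rw [Finset.sum_range_succ, Finset.sum_range_succ, Finset.sum_range_zero, hc1] at haev
      simp only [zero_add, pow_zero, pow_one, one_smul, smul_eq_mul] at haev
      have hy : y = ((-(minpoly K y).coeff 0 : K) : F) := by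
        have h0 : ((minpoly K y).coeff 0 : F) • (1:F) + y = 0 := haev
        rw [smul_eq_mul, mul_one] at h0
        push_cast
        linear_combination h0
      set k : K := -(minpoly K y).coeff 0 with hk
      refine ⟨-(k + k), k * k, ?_⟩
      rw [hy]
      push_cast
      ring
    · -- degree 2
      have hc2 : (minpoly K y).coeff 2 = 1 := by
        have := hmon.leadingCoeff
        rwa [Polynomial.leadingCoeff, hd] at this
      rw [Finset.sum_range_succ, Finset.sum_range_succ, Finset.sum_range_succ,
        Finset.sum_range_zero, hc2] at haev
      refine ⟨(minpoly K y).coeff 1, (minpoly K y).coeff 0, ?_⟩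
      have : (0:F) + ((minpoly K y).coeff 0) • y ^ 0 + ((minpoly K y).coeff 1) • y ^ 1
          + (1 : K) • y ^ 2 = 0 := haev
      simp only [zero_add, pow_zero, pow_one, one_smul, Algebra.smul_def] at this
      have halg : ∀ k : K, algebraMap K F k = (↑k : F) := fun k => rfl
      rw [halg, halg, map_one, one_mul] at this
      linear_combination this
  -- conjugation stabilizes the image of σ₀
  have hstab : ∀ y : F, ∃ x : F, σ₀ x = (starRingEnd ℂ) (σ₀ y) := by
    intro y
    obtain ⟨b, c, hq⟩ := quad y
    have hz : (σ₀ y) ^ 2 + σ₀ ↑b * σ₀ y + σ₀ ↑c = 0 := by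
      have := congrArg σ₀ hq
      simpa [map_add, map_mul, map_pow] using this
    have hw : ((starRingEnd ℂ) (σ₀ y)) ^ 2 + σ₀ ↑b * (starRingEnd ℂ) (σ₀ y) + σ₀ ↑c = 0 := by
      have := congrArg (starRingEnd ℂ) hz
      simp only [map_add, map_mul, map_pow, map_zero] at this
      rwa [hKconj σ₀ b, hKconj σ₀ c] at this
    rcases quad_roots hz hw with h1 | h1
    · exact ⟨y, h1.symm⟩
    · exact ⟨-↑b - y, by rw [map_sub, map_neg, h1]⟩
  let r : F → F := fun y => (hstab y).choose
  have hr : ∀ y : F, σ₀ (r y) = (starRingEnd ℂ) (σ₀ y) := fun y => (hstab y).choose_spec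
  have hrinv : ∀ y : F, r (r y) = y := by
    intro y
    apply σ₀.injective
    rw [hr, hr, Complex.conj_conj]
  let ρ : F ≃+* F :=
    { toFun := r
      invFun := r
      left_inv := hrinv
      right_inv := hrinv
      map_mul' := fun a b => σ₀.injective (by simp only [hr, map_mul])
      map_add' := fun a b => σ₀.injective (by simp only [hr, map_add]) }
  have hρ : ∀ y : F, σ₀ (ρ y) = (starRingEnd ℂ) (σ₀ y) := hr
  have hρfix : ∀ k : K, ρ ↑k = ↑k := by
    intro k
    apply σ₀.injective
    rw [hρ, hKconj σ₀ k]
  have hρne : ρ ≠ RingEquiv.refl F := by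
    intro hid
    have him : ∀ x : F, (σ₀ x).im = 0 := by
      intro x
      have : σ₀ (ρ x) = σ₀ x := by rw [hid]; rfl
      rw [hρ] at this
      exact Complex.conj_eq_iff_im.mp this
    exact himag.false (realHomOf σ₀ him)
  refine ⟨ρ, hρne, ?_⟩
  intro σ
  letI : Algebra K ℂ := (σ.comp K.subtype).toAlgebra
  have halgmap : ∀ k : K, algebraMap K ℂ k = σ ↑k := fun k => rfl
  let A : F →ₐ[K] ℂ := { toRingHom := σ, commutes' := fun k => rfl }
  let B : F →ₐ[K] ℂ :=
    { toRingHom := σ.comp (ρ : F →+* F)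
      commutes' := fun k => by
        show σ (ρ ((k : K) : F)) = σ ↑k
        rw [hρfix k] }
  let Cc : F →ₐ[K] ℂ :=
    { toRingHom := (starRingEnd ℂ).comp σ
      commutes' := fun k => by
        show (starRingEnd ℂ) (σ ((k : K) : F)) = σ ↑k
        exact hKconj σ k }
  have hcard : Fintype.card (F →ₐ[K] ℂ) = 2 := by
    rw [AlgHom.card]; exact hK2
  have hAB : A ≠ B := by
    intro hab
    apply hρne
    ext x
    have h5 := DFunLike.congr_fun hab x
    exact σ.injective h5.symm
  have hAC : A ≠ Cc := by
    intro hac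
    have him : ∀ x : F, (σ x).im = 0 := by
      intro x
      have h5 := DFunLike.congr_fun hac x
      exact Complex.conj_eq_iff_im.mp h5.symm
    exact himag.false (realHomOf σ him)
  have hBC : B = Cc := card2_pigeon hcard hAB hAC
  intro x
  exact DFunLike.congr_fun hBC x


theorem cm_key (F : Type*) [Field F] [NumberField F] (ρ : F ≃+* F)
    (hne : ρ ≠ RingEquiv.refl F)
    (h : ∀ σ : F →+* ℂ, ∀ x : F, σ (ρ x) = (starRingEnd ℂ) (σ x)) :
    (∀ x : F, ρ (ρ x) = x) ∧
    IsTotallyRealField (fixedSubfield ρ) ∧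
    Module.finrank (fixedSubfield ρ) F = 2 ∧
    IsTotallyImaginary F := by
  haveI : Algebra.IsAlgebraic ℚ F := Algebra.IsAlgebraic.of_finite ℚ F
  let σ₀ : F →+* ℂ := (IsAlgClosed.lift (R := ℚ) (S := F) (M := ℂ)).toRingHom
  -- involution
  have hinv : ∀ x : F, ρ (ρ x) = x := by
    intro x
    apply σ₀.injective
    rw [h σ₀, h σ₀, Complex.conj_conj]
  -- totally imaginary
  have himag : IsTotallyImaginary F := by
    constructor
    intro τ
    have hfix : ∀ x : F, ρ x = x := by
      intro x
      have := h (Complex.ofRealHom.comp τ) x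
      simp only [RingHom.coe_comp, Function.comp_apply, Complex.ofRealHom_eq_coe,
        Complex.conj_ofReal] at this
      exact (Complex.ofRealHom.comp τ).injective (by simpa using this)
    exact hne (RingEquiv.ext hfix)
  -- group theory
  have hρne1 : ρ ≠ 1 := hne
  have hρ2 : ρ ^ 2 = 1 := by
    ext x
    simpa [pow_two] using hinv x
  have hord : orderOf ρ = 2 := orderOf_eq_prime hρ2 hρne1
  have hfin : IsOfFinOrder ρ := by
    rw [← orderOf_pos_iff, hord]; norm_num
  haveI : Finite (Subgroup.zpowers ρ) := hfin.finite_zpowers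
  haveI : Fintype (Subgroup.zpowers ρ) := Fintype.ofFinite _
  haveI : FaithfulSMul (Subgroup.zpowers ρ) F :=
    ⟨fun {g₁ g₂} hgg => Subtype.ext (RingEquiv.ext fun x => hgg x)⟩
  have hcard : Fintype.card (Subgroup.zpowers ρ) = 2 := by
    rw [← Nat.card_eq_fintype_card, Nat.card_zpowers, hord]
  have hmem : ∀ g ∈ Subgroup.zpowers ρ, g = 1 ∨ g = ρ := by
    intro g hg
    obtain ⟨n, rfl⟩ := Subgroup.mem_zpowers_iff.mp hg
    rcases Int.even_or_odd n with ⟨k, hk⟩ | ⟨k, hk⟩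
    · left
      rw [hk, ← two_mul, zpow_mul]
      rw [show ((2:ℤ)) = ((2:ℕ):ℤ) by norm_num, zpow_natCast, hρ2, one_zpow]
    · right
      rw [hk, zpow_add, zpow_mul, show ((2:ℤ)) = ((2:ℕ):ℤ) by norm_num, zpow_natCast,
        hρ2, one_zpow, one_mul, zpow_one]
  have hfeq : fixedSubfield ρ = FixedPoints.subfield (Subgroup.zpowers ρ) F := by
    ext x
    constructor
    · intro hx g
      rcases hmem g g.2 with h1 | h1
      · have : g = (1 : Subgroup.zpowers ρ) := Subtype.ext h1
        rw [this, one_smul]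
      · have : (g : F ≃+* F) x = x := by rw [h1]; exact hx
        exact this
    · intro hx
      have := hx ⟨ρ, Subgroup.mem_zpowers ρ⟩
      exact this
  have hrank : Module.finrank (fixedSubfield ρ) F = 2 := by
    rw [hfeq, FixedPoints.finrank_eq_card (Subgroup.zpowers ρ) F, hcard]
  refine ⟨hinv, ?_, hrank, himag⟩
  -- totally real fixed field
  intro τ x
  letI : Algebra (fixedSubfield ρ) ℂ := τ.toAlgebra
  haveI : FiniteDimensional (fixedSubfield ρ) F := FiniteDimensional.of_finrank_eq_succ hrank
  haveI : Algebra.IsAlgebraic (fixedSubfield ρ) F := Algebra.IsAlgebraic.of_finite _ _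
  let φ := IsAlgClosed.lift (R := fixedSubfield ρ) (S := F) (M := ℂ)
  have hx : φ.toRingHom (↑x) = τ x := φ.commutes x
  have hfix : ρ (↑x : F) = ↑x := x.2
  have hconj : (starRingEnd ℂ) (φ.toRingHom ↑x) = φ.toRingHom ↑x := by
    rw [← h φ.toRingHom ↑x, hfix]
  refine ⟨(φ.toRingHom ↑x).re, ?_⟩
  rw [← hx]
  exact (Complex.conj_eq_iff_re.mp hconj).symm


/-- A number field is a CM-field iff it carries a nontrivial automorphism `ρ` with
`σ ∘ ρ = conj ∘ σ` for every embedding `σ : F → ℂ`; moreover any such `ρ` is an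
involution whose fixed field is totally real of index two, and `F` is totally
imaginary. -/
theorem cmField_iff_exists_conj_automorphism
    (F : Type*) [Field F] [NumberField F] :
    ((∃ ρ : F ≃+* F, ρ ≠ RingEquiv.refl F ∧
        ∀ σ : F →+* ℂ, ∀ x : F, σ (ρ x) = (starRingEnd ℂ) (σ x)) ↔ IsCMField F) ∧
    (∀ ρ : F ≃+* F, ρ ≠ RingEquiv.refl F →
      (∀ σ : F →+* ℂ, ∀ x : F, σ (ρ x) = (starRingEnd ℂ) (σ x)) →
        (∀ x : F, ρ (ρ x) = x) ∧
        IsTotallyRealField (fixedSubfield ρ) ∧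
        Module.finrank (fixedSubfield ρ) F = 2 ∧
        IsTotallyImaginary F) := by
  constructor
  · constructor
    · rintro ⟨ρ, hne, h⟩
      obtain ⟨hinv, hreal, hrank, himag⟩ := cm_key F ρ hne h
      exact ⟨himag, fixedSubfield ρ, hreal, hrank⟩
    · exact cm_construct F
  · exact fun ρ hne h => cm_key F ρ hne h
end

section
/- Let F be a number field with a ring automorphism ρ, ρ ≠ id, satisfying σ ∘ ρ = conj ∘ σ for every ring homomorphism σ : F → ℂ, and let Φ be a CM-type of F. Then there exists ζ ∈ F such that ρ(ζ) = −ζ and for every σ ∈ Φ the complex number σ(ζ) has real part 0 and strictly positive imaginary part. -/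
/-!
Elements `ξ` with `ρ ξ = -ξ` have purely imaginary images under every embedding. One can choose
such a `ξ` with `Im σ ξ + Im τ ξ ≠ 0` for all `σ, τ ∈ Φ`: each condition fails only on a proper
`ℚ`-subspace, since `Im ∘ σ = -(Im ∘ τ)` would force `σ = conj ∘ τ`. Then `t_σ = Im σ ξ` is
nonzero and determined by `t_σ²`, so a rational polynomial `P` with `P(t_σ²)` of the sign of `t_σ`
exists (approximate a real interpolating polynomial), and `ζ = P(-ξ²) ξ` works.
-/

open Polynomial ComplexConjugate

theorem LinearMap.exists_forall_apply_ne_zero {ι K V W : Type*} [Finite ι] [Field K] [Infinite K]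
    [AddCommGroup V] [Module K V] [AddCommGroup W] [Module K W]
    (f : ι → V →ₗ[K] W) (hf : ∀ i, f i ≠ 0) : ∃ v, ∀ i, f i v ≠ 0 := by
  obtain ⟨v, hv⟩ := Submodule.exists_forall_notMem_of_forall_ne_top (fun i ↦ LinearMap.ker (f i))
    fun i ↦ LinearMap.ker_eq_top.not.mpr (hf i)
  exact ⟨v, fun i ↦ hv i⟩

theorem exists_rat_polynomial_approx (S : Finset ℝ) (f : ℝ → ℝ) {ε : ℝ} (hε : 0 < ε) :
    ∃ P : ℚ[X], ∀ x ∈ S, |aeval x P - f x| < ε := by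
  classical
  set p := Lagrange.interpolate S id f
  set n := p.natDegree + 1
  let value (c : Fin n → ℝ) (x : ℝ) : ℝ := ∑ k, c k * x ^ (k : ℕ)
  have hp : ∀ x ∈ S, value (fun k ↦ p.coeff k) x = f x := fun x hx ↦ by
    have h := Lagrange.eval_interpolate_at_node f (Set.injOn_id _) hx
    rwa [eval_eq_sum_range, ← Fin.sum_univ_eq_sum_range (fun k ↦ p.coeff k * id x ^ k)] at h
  let U := ⋂ x ∈ S, {c : Fin n → ℝ | |value c x - f x| < ε}
  have hU : IsOpen U := isOpen_biInter_finset fun x _ ↦ isOpen_lt (by fun_prop) continuous_const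
  have hpU : (fun k : Fin n ↦ p.coeff k) ∈ U := Set.mem_iInter₂.mpr fun x hx ↦ by simp [hp x hx, hε]
  obtain ⟨q, hq⟩ := (DenseRange.piMap fun _ ↦ Rat.denseRange_cast).exists_mem_open hU ⟨_, hpU⟩
  refine ⟨∑ k, C (q k) * X ^ (k : ℕ), fun x hx ↦ ?_⟩
  simpa [value] using Set.mem_iInter₂.mp hq x hx

theorem exists_rat_polynomial_sign {T : Set ℝ} (hT : T.Finite)
    (hT_add : ∀ a ∈ T, ∀ b ∈ T, a + b ≠ 0) : ∃ P : ℚ[X], ∀ t ∈ T, 0 < aeval (t ^ 2) P * t := by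
  classical
  -- `√(t²) = |t|` lies in `T` exactly when `0 < t`, as `t` and `-t` are never both in `T`.
  obtain ⟨P, hP⟩ := exists_rat_polynomial_approx (hT.toFinset.image (· ^ 2))
    (fun x ↦ if √x ∈ T then 1 else -1) one_pos
  refine ⟨P, fun t ht ↦ ?_⟩
  have h := abs_lt.mp (hP (t ^ 2) (Finset.mem_image_of_mem _ (hT.mem_toFinset.mpr ht)))
  rw [Real.sqrt_sq_eq_abs] at h
  have ht0 : t ≠ 0 := fun h ↦ hT_add t ht t ht (by simp [h])
  rcases ht0.lt_or_gt with hneg | hpos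
  · have : -t ∉ T := fun h' ↦ hT_add t ht (-t) h' (add_neg_cancel t)
    rw [abs_of_neg hneg, if_neg this] at h
    exact mul_pos_of_neg_of_neg (by linarith) hneg
  · rw [abs_of_pos hpos, if_pos ht] at h
    exact mul_pos (by linarith) hpos

theorem map_aeval_rat {R S G : Type*} [Ring R] [Ring S] [Algebra ℚ R] [Algebra ℚ S]
    [FunLike G R S] [RingHomClass G R S] (f : G) (x : R) (P : ℚ[X]) :
    f (aeval x P) = aeval (f x) P :=
  (aeval_algHom_apply (f : R →+* S).toRatAlgHom x P).symm

section Embeddings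

variable {F : Type*} [Field F]

theorem Function.Involutive.of_comp_eq_conj {ρ : F → F} {σ : F →+* ℂ}
    (hσ : ∀ x, σ (ρ x) = conj (σ x)) : Function.Involutive ρ :=
  fun x ↦ σ.injective <| by rw [hσ, hσ, Complex.conj_conj]

theorem exists_ne_zero_apply_eq_neg {ρ : F ≃+* F} (hρ : ρ ≠ RingEquiv.refl F)
    (hinv : Function.Involutive ρ) : ∃ ξ : F, ξ ≠ 0 ∧ ρ ξ = -ξ := by
  obtain ⟨η, hη⟩ : ∃ η, ρ η ≠ η := by
    by_contra! h
    exact hρ (RingEquiv.ext h)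
  exact ⟨η - ρ η, sub_ne_zero.mpr hη.symm, by rw [map_sub, hinv]; ring⟩

theorem re_apply_eq_zero_of_apply_eq_neg {ρ : F → F} {σ : F →+* ℂ}
    (hσ : ∀ x, σ (ρ x) = conj (σ x)) {ξ : F} (hξ : ρ ξ = -ξ) : (σ ξ).re = 0 := by
  have h := congrArg Complex.re (hσ ξ)
  rw [hξ, map_neg, Complex.conj_re, Complex.neg_re] at h
  linarith

/-- Multiplying by an element with purely imaginary nonzero image turns imaginary parts into
real parts. -/
theorem RingHom.eq_of_forall_im_eq {σ τ : F →+* ℂ} {ξ : F} (hξ : ξ ≠ 0)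
    (hσξ : (σ ξ).re = 0) (hτξ : (τ ξ).re = 0) (him : ∀ x, (σ x).im = (τ x).im) : σ = τ := by
  have hστξ : σ ξ = τ ξ := Complex.ext (hσξ.trans hτξ.symm) (him ξ)
  have hξim : (σ ξ).im ≠ 0 := fun h ↦ hξ ((map_eq_zero σ).mp (Complex.ext hσξ h))
  ext x
  refine Complex.ext (mul_right_cancel₀ hξim ?_) (him x)
  have h := him (x * ξ)
  rwa [map_mul, map_mul, ← hστξ, Complex.mul_im, Complex.mul_im, hσξ, mul_zero, mul_zero,
    add_zero, add_zero] at h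

theorem IsCMType.ne_conj_comp {Φ : Set (F →+* ℂ)} (hΦ : IsCMType F Φ) {σ τ : F →+* ℂ}
    (hσ : σ ∈ Φ) (hτ : τ ∈ Φ) : σ ≠ (starRingEnd ℂ).comp τ := by
  rintro rfl
  rcases hΦ ((starRingEnd ℂ).comp τ) with ⟨-, h⟩ | ⟨-, h⟩
  · exact h ⟨τ, hτ, rfl⟩
  · exact h hσ

variable [CharZero F]

noncomputable def RingHom.imLinearMap (σ : F →+* ℂ) : F →ₗ[ℚ] ℝ :=
  (Complex.imLm.restrictScalars ℚ).comp σ.toRatAlgHom.toLinearMap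

@[simp]
theorem RingHom.imLinearMap_apply (σ : F →+* ℂ) (x : F) : σ.imLinearMap x = (σ x).im := rfl

theorem IsCMType.imLinearMap_add_ne_zero {ρ : F → F}
    (hconj : ∀ σ : F →+* ℂ, ∀ x, σ (ρ x) = conj (σ x)) {ξ : F} (hξ : ξ ≠ 0) (hρξ : ρ ξ = -ξ)
    {Φ : Set (F →+* ℂ)} (hΦ : IsCMType F Φ) {σ τ : F →+* ℂ} (hσ : σ ∈ Φ) (hτ : τ ∈ Φ) :
    σ.imLinearMap + τ.imLinearMap ≠ 0 := by
  intro h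
  refine hΦ.ne_conj_comp hσ hτ (RingHom.eq_of_forall_im_eq hξ ?_ ?_ fun x ↦ ?_)
  · exact re_apply_eq_zero_of_apply_eq_neg (hconj σ) hρξ
  · simpa using re_apply_eq_zero_of_apply_eq_neg (hconj τ) hρξ
  · simpa [eq_neg_iff_add_eq_zero] using LinearMap.congr_fun h x

theorem map_aeval_neg_sq_mul (σ : F →+* ℂ) (P : ℚ[X]) {ξ : F} (hξ : (σ ξ).re = 0) :
    σ (aeval (-ξ ^ 2) P * ξ) = (aeval ((σ ξ).im ^ 2) P * (σ ξ).im : ℝ) * Complex.I := by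
  set t := (σ ξ).im
  replace hξ : σ ξ = t * Complex.I := Complex.ext (by simp [hξ]) (by simp [t])
  have hsq : σ (-ξ ^ 2) = algebraMap ℝ ℂ (t ^ 2) := by
    rw [map_neg, map_pow, hξ, mul_pow, Complex.I_sq]; simp
  rw [map_mul, map_aeval_rat, hsq, aeval_algebraMap_apply, hξ, Complex.coe_algebraMap]
  push_cast; ring

end Embeddings

/-- Existence of a totally imaginary element `ζ` adapted to a CM-type: `ρ(ζ) = -ζ` and
`σ(ζ)` is purely imaginary with positive imaginary part for all `σ` in the CM-type. -/
theorem exists_totally_imaginary_element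
    (F : Type*) [Field F] [NumberField F] (ρ : F ≃+* F)
    (hρ : ρ ≠ RingEquiv.refl F)
    (hconj : ∀ σ : F →+* ℂ, ∀ x : F, σ (ρ x) = (starRingEnd ℂ) (σ x))
    (Φ : Set (F →+* ℂ)) (hΦ : IsCMType F Φ) :
    ∃ ζ : F, ρ ζ = -ζ ∧ ∀ σ ∈ Φ, (σ ζ).re = 0 ∧ 0 < (σ ζ).im := by
  obtain ⟨σ₀⟩ : Nonempty (F →+* ℂ) := inferInstance
  have hinv : Function.Involutive ρ := .of_comp_eq_conj (hconj σ₀)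
  obtain ⟨ξ₀, hξ₀, hρξ₀⟩ := exists_ne_zero_apply_eq_neg hρ hinv
  obtain ⟨x, hx⟩ := LinearMap.exists_forall_apply_ne_zero
    (fun p : Φ × Φ ↦ p.1.1.imLinearMap + p.2.1.imLinearMap)
    fun p ↦ hΦ.imLinearMap_add_ne_zero hconj hξ₀ hρξ₀ p.1.2 p.2.2
  set ξ := x - ρ x
  have hρξ : ρ ξ = -ξ := by simp [ξ, hinv x]
  have hξ_im : ∀ σ : F →+* ℂ, (σ ξ).im = 2 * (σ x).im := fun σ ↦ by simp [ξ, hconj]; ring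
  obtain ⟨P, hP⟩ := exists_rat_polynomial_sign (Φ.toFinite.image fun σ ↦ (σ ξ).im) <| by
    rintro _ ⟨σ, hσ, rfl⟩ _ ⟨τ, hτ, rfl⟩
    have := hx (⟨σ, hσ⟩, ⟨τ, hτ⟩)
    simp only [LinearMap.add_apply, RingHom.imLinearMap_apply] at this
    simp only [hξ_im]
    contrapose! this
    linarith
  refine ⟨aeval (-ξ ^ 2) P * ξ, ?_, fun σ hσ ↦ ?_⟩
  · rw [map_mul, map_aeval_rat, map_neg, map_pow, hρξ, neg_sq]
    ring
  · rw [map_aeval_neg_sq_mul σ P (re_apply_eq_zero_of_apply_eq_neg (hconj σ) hρξ)]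
    simpa using hP _ (Set.mem_image_of_mem _ hσ)
end

section
/- Let F be a number field with a ring automorphism ρ satisfying σ ∘ ρ = conj ∘ σ for every ring homomorphism σ : F → ℂ, and let ζ ∈ F satisfy ρ(ζ) = −ζ. Then the ℚ-bilinear form E on F defined by E(x, y) := Tr_{F/ℚ}(ζ · x · ρ(y)) is alternating: E(x, x) = 0 for all x ∈ F, and consequently E(x, y) = −E(y, x) for all x, y ∈ F. -/
/-- The trace form `E(x,y) = Tr_{F/ℚ}(ζ·x·ρ(y))` is alternating when `ρ(ζ) = -ζ`. -/
theorem trace_form_alternating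
    (F : Type*) [Field F] [NumberField F] (ρ : F ≃+* F)
    (hconj : ∀ σ : F →+* ℂ, ∀ x : F, σ (ρ x) = (starRingEnd ℂ) (σ x))
    (ζ : F) (hζ : ρ ζ = -ζ) :
    (∀ x : F, Algebra.trace ℚ F (ζ * x * ρ x) = 0) ∧
    (∀ x y : F, Algebra.trace ℚ F (ζ * x * ρ y) = - Algebra.trace ℚ F (ζ * y * ρ x)) := by
  -- ρ is an involution
  have hρ2 : ∀ x : F, ρ (ρ x) = x := by
    intro x
    obtain ⟨σ⟩ : Nonempty (F →+* ℂ) := inferInstance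
    apply σ.injective
    rw [hconj σ, hconj σ, Complex.conj_conj]
  -- ρ as a ℚ-algebra equivalence
  let e : F ≃ₐ[ℚ] F :=
    { ρ with commutes' := fun q => map_ratCast (ρ.toRingHom) q }
  have hTr : ∀ a : F, Algebra.trace ℚ F (ρ a) = Algebra.trace ℚ F a := fun a =>
    Algebra.trace_eq_of_algEquiv e a
  have h1 : ∀ x : F, Algebra.trace ℚ F (ζ * x * ρ x) = 0 := by
    intro x
    have : Algebra.trace ℚ F (ζ * x * ρ x) = - Algebra.trace ℚ F (ζ * x * ρ x) := by
      conv_lhs => rw [← hTr (ζ * x * ρ x)]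
      rw [show ρ (ζ * x * ρ x) = -(ζ * x * ρ x) by rw [map_mul, map_mul, hζ, hρ2]; ring,
        map_neg]
    linarith
  refine ⟨h1, fun x y => ?_⟩
  have hxy := h1 (x + y)
  have hx := h1 x
  have hy := h1 y
  rw [show ζ * (x + y) * ρ (x + y) = ζ * x * ρ x + ζ * y * ρ y + (ζ * x * ρ y + ζ * y * ρ x) by
    rw [map_add]; ring, map_add, map_add, map_add, hx, hy] at hxy
  linarith
end

section
/- Let F be a number field with a ring automorphism ρ satisfying σ ∘ ρ = conj ∘ σ for every ring homomorphism σ : F → ℂ, let Φ be a CM-type of F, and let ζ ∈ F satisfy ρ(ζ) = −ζ. Then for all x, y ∈ F, the image in ℂ of Tr_{F/ℚ}(ζ · x · ρ(y)) equals Σ_{σ ∈ Φ} σ(ζ) · ( σ(x) · conj(σ(y)) − conj(σ(x)) · σ(y) ). -/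
/-! The trace is the sum of `σ a` over all complex embeddings, which a CM-type `Φ` groups into
conjugate pairs `σ a + conj (σ a)`, `σ ∈ Φ`. For
`a = ζ x ρ(y)` with `conj (σ ζ) = -σ ζ`, that pair is `σ ζ (σ x conj (σ y) - conj (σ x) σ y)`. -/

open Function in
theorem Fintype.sum_eq_finsum_mem_add_comp {α M : Type*} [Fintype α] [AddCommMonoid M]
    {f : α → α} (hf : Injective f) {s : Set α} (hs : ∀ a, Xor (a ∈ s) (a ∈ f '' s))
    (g : α → M) : ∑ a, g a = ∑ᶠ a ∈ s, (g a + g (f a)) := by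
  have hdisj : Disjoint s (f '' s) :=
    Set.disjoint_left.2 fun a ha hfa => ((hs a).resolve_left fun h => h.2 hfa).2 ha
  have hcover : s ∪ f '' s = Set.univ :=
    Set.eq_univ_of_forall fun a => (hs a).or
  rw [finsum_mem_add_distrib (Set.toFinite s), ← finsum_mem_image hf.injOn,
    ← finsum_mem_union hdisj (Set.toFinite _) (Set.toFinite _), hcover, finsum_mem_univ,
    finsum_eq_sum_of_fintype]

theorem NumberField.algebraMap_trace_eq_sum_ringHom (F A : Type*) [Field F] [NumberField F]
    [Field A] [CharZero A] [IsAlgClosed A] (a : F) :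
    algebraMap ℚ A (Algebra.trace ℚ F a) = ∑ σ : F →+* A, σ a := by
  rw [trace_eq_sum_embeddings A]
  exact Fintype.sum_equiv (RingHom.equivRatAlgHom F A).symm _ _ fun _ => rfl

theorem IsCMType.algebraMap_trace_eq_finsum {F : Type*} [Field F] [NumberField F]
    {Φ : Set (F →+* ℂ)} (hΦ : IsCMType F Φ) (a : F) :
    algebraMap ℚ ℂ (Algebra.trace ℚ F a) = ∑ᶠ σ ∈ Φ, (σ a + starRingEnd ℂ (σ a)) := by
  have hinj : Function.Injective fun τ : F →+* ℂ => (starRingEnd ℂ).comp τ :=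
    fun σ τ h => RingHom.ext fun z => by
      simpa using congrArg (starRingEnd ℂ) (RingHom.congr_fun h z)
  rw [NumberField.algebraMap_trace_eq_sum_ringHom, Fintype.sum_eq_finsum_mem_add_comp hinj hΦ]
  rfl

/-- The trace form `E(x,y) = Tr_{F/ℚ}(ζ·x·ρ(y))`, computed in `ℂ`, equals the sum over
the CM-type `Φ` of `σ(ζ)·(σ(x)·conj(σ(y)) - conj(σ(x))·σ(y))`. -/
theorem trace_form_eq_sum_over_CMType
    (F : Type*) [Field F] [NumberField F] (ρ : F ≃+* F)
    (hconj : ∀ σ : F →+* ℂ, ∀ x : F, σ (ρ x) = (starRingEnd ℂ) (σ x))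
    (Φ : Set (F →+* ℂ)) (hΦ : IsCMType F Φ)
    (ζ : F) (hζ : ρ ζ = -ζ) :
    ∀ x y : F,
      algebraMap ℚ ℂ (Algebra.trace ℚ F (ζ * x * ρ y)) =
        ∑ᶠ σ ∈ Φ, σ ζ * (σ x * (starRingEnd ℂ) (σ y) - (starRingEnd ℂ) (σ x) * σ y) := by
  intro x y
  rw [hΦ.algebraMap_trace_eq_finsum]
  refine finsum_mem_congr rfl fun σ _ => ?_
  have hζσ : starRingEnd ℂ (σ ζ) = -σ ζ := by rw [← hconj, hζ, map_neg]
  simp only [map_mul, hconj, Complex.conj_conj, hζσ]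
  ring
end

section
/- Let F be a totally imaginary number field and let Φ be a CM-type of F, with associated subspace U_Φ of F ⊗_ℚ ℂ. Then the only ℂ-linear map f : σ(U_Φ) → U_Φ commuting with multiplication by every element of F (acting ℂ-linearly on F ⊗_ℚ ℂ via x · (y ⊗ z) = (x·y) ⊗ z) is the zero map; i.e., the F-action on the Hodge structure (F, U_Φ) is rigid. -/
open scoped TensorProduct

noncomputable section

instance : RingHomSurjective (starRingEnd ℂ) :=
  ⟨fun z => ⟨star z, by simp⟩⟩

/-- Complex conjugation as a `ℚ`-linear map on `ℂ`. -/
def conjQLin : ℂ →ₗ[ℚ] ℂ where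
  toFun z := (starRingEnd ℂ) z
  map_add' := by intros; simp
  map_smul' := by intro q z; simp [Rat.smul_def, map_mul]

/-- The antilinear involution `σ` on `ℂ ⊗[ℚ] V` determined by conjugation on the
first factor, packaged as a `starRingEnd ℂ`-semilinear map. -/
def sigmaV (V : Type*) [AddCommGroup V] [Module ℚ V] :
    (ℂ ⊗[ℚ] V) →ₛₗ[starRingEnd ℂ] (ℂ ⊗[ℚ] V) where
  toFun := TensorProduct.map conjQLin LinearMap.id
  map_add' := map_add _
  map_smul' c x := by
    induction x using TensorProduct.induction_on with
    | zero => simp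
    | tmul z v =>
        simp [TensorProduct.smul_tmul', smul_eq_mul, conjQLin, map_mul]
    | add x y hx hy =>
        simp only [smul_add, map_add]
        exact congrArg₂ (· + ·) hx hy

/-- `σ(U)`, the image of a `ℂ`-subspace `U` of `ℂ ⊗[ℚ] V` under the conjugation
involution; it is again a `ℂ`-subspace. -/
def sigmaSub {V : Type*} [AddCommGroup V] [Module ℚ V]
    (U : Submodule ℂ (ℂ ⊗[ℚ] V)) : Submodule ℂ (ℂ ⊗[ℚ] V) :=
  U.map (sigmaV V)

/-- A `ℂ`-linear map `f : P → Q` between subspaces of `ℂ ⊗[ℚ] V` commutes with an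
operator `T` of the ambient space. -/
def CommutesWith {V : Type*} [AddCommGroup V] [Module ℚ V]
    (P Q : Submodule ℂ (ℂ ⊗[ℚ] V)) (f : P →ₗ[ℂ] Q)
    (T : (ℂ ⊗[ℚ] V) →ₗ[ℂ] (ℂ ⊗[ℚ] V)) : Prop :=
  ∀ (x : P) (hx : T ↑x ∈ P), (f ⟨T ↑x, hx⟩ : ℂ ⊗[ℚ] V) = T ↑(f x)

/-- `E` is a polarization of the weight-one rational Hodge structure `(V, U)`:
it is alternating, its `ℂ`-bilinear extension vanishes on `U × U`, and
`-i·E_ℂ(u, σ u)` is a positive real for every nonzero `u ∈ U`. -/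
def IsPolarization {V : Type*} [AddCommGroup V] [Module ℚ V]
    (U : Submodule ℂ (ℂ ⊗[ℚ] V)) (E : V →ₗ[ℚ] V →ₗ[ℚ] ℚ) : Prop :=
  (∀ x : V, E x x = 0) ∧
  (∀ u ∈ U, ∀ u' ∈ U, LinearMap.BilinForm.baseChange ℂ E u u' = 0) ∧
  (∀ u ∈ U, u ≠ 0 → ∃ r : ℝ, 0 < r ∧
    -Complex.I * LinearMap.BilinForm.baseChange ℂ E u (sigmaV V u) = (r : ℂ))


/-- The `ℂ`-algebra homomorphism `σ̃ : F ⊗_ℚ ℂ → ℂ` (realized on `ℂ ⊗[ℚ] F`)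
induced by an embedding `σ : F → ℂ`, as a `ℂ`-linear map: `σ̃(z ⊗ x) = z·σ(x)`. -/
def sigmaTilde (F : Type*) [Field F] [Algebra ℚ F] (σ : F →+* ℂ) :
    (ℂ ⊗[ℚ] F) →ₗ[ℂ] ℂ :=
  TensorProduct.AlgebraTensorModule.lift
    { toFun := fun z => z • (RingHom.equivRatAlgHom F ℂ σ).toLinearMap
      map_add' := fun a b => add_smul a b _
      map_smul' := fun c z => by simp [mul_smul] }

/-- The Hodge structure `U_Φ ⊆ ℂ ⊗[ℚ] F` associated with a CM-type `Φ`: the subspace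
annihilated by `σ̃` for every embedding `σ ∉ Φ`. -/
def UPhi (F : Type*) [Field F] [Algebra ℚ F] (Φ : Set (F →+* ℂ)) :
    Submodule ℂ (ℂ ⊗[ℚ] F) :=
  ⨅ σ ∈ {σ : F →+* ℂ | σ ∉ Φ}, LinearMap.ker (sigmaTilde F σ)

/-!
Since `F/ℚ` is separable, the `[F : ℚ]` characters `σ̃` are linearly independent, so together
they identify `ℂ ⊗[ℚ] F` with `(F →+* ℂ) → ℂ`. A map commuting with `ℂ` and with `F` commutes
with multiplication by all of `ℂ ⊗[ℚ] F`, in particular by the idempotent `e_ρ` of each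
coordinate. In these coordinates `U_Φ` is supported on `Φ` and `σ(U_Φ)` on `conj ∘ Φ`, which is
disjoint from `Φ` for a CM-type. So for `ρ ∈ Φ`, `e_ρ` kills `σ(U_Φ)`, hence kills `f(σ(U_Φ))`;
for `ρ ∉ Φ` the coordinate `ρ̃` already vanishes on `U_Φ`. Thus `f = 0`.
-/

theorem LinearMap.baseChange_mulLeft {R A B : Type*} [CommSemiring R] [CommSemiring A]
    [Algebra R A] [Semiring B] [Algebra R B] (b : B) :
    (LinearMap.mulLeft R b).baseChange A = LinearMap.mulLeft A ((1 : A) ⊗ₜ[R] b) := by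
  ext x
  simp

theorem LinearIndependent.bijective_pi_of_card_eq_finrank {K V ι : Type*} [Field K]
    [AddCommGroup V] [Module K V] [FiniteDimensional K V] [Fintype ι]
    {φ : ι → Module.Dual K V} (hφ : LinearIndependent K φ)
    (hcard : Fintype.card ι = Module.finrank K V) : Function.Bijective (LinearMap.pi φ) := by
  have hinj : Function.Injective (LinearMap.pi φ) := by
    rw [← LinearMap.ker_eq_bot, eq_bot_iff]
    intro v hv
    have hspan : Submodule.span K (Set.range φ) = ⊤ :=
      hφ.span_eq_top_of_card_eq_finrank' (by rw [Subspace.dual_finrank_eq, hcard])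
    rw [← Submodule.dualCoannihilator_top, ← hspan, ← SetLike.mem_coe,
      Submodule.coe_dualCoannihilator_span]
    rintro _ ⟨i, rfl⟩
    exact congrFun hv i
  refine ⟨hinj, ?_⟩
  rwa [← LinearMap.injective_iff_surjective_of_finrank_eq_finrank]
  rw [Module.finrank_fintype_fun_eq_card, hcard]

section Conjugation

variable {V : Type*} [AddCommGroup V] [Module ℚ V]

@[simp]
theorem sigmaV_tmul (z : ℂ) (v : V) : sigmaV V (z ⊗ₜ v) = starRingEnd ℂ z ⊗ₜ v := rfl

@[simp]
theorem sigmaV_sigmaV (w : ℂ ⊗[ℚ] V) : sigmaV V (sigmaV V w) = w := by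
  induction w using TensorProduct.induction_on with
  | zero => simp
  | tmul z v => simp
  | add a b ha hb => simp only [map_add, ha, hb]

end Conjugation

theorem IsCMType.starRingEnd_comp_notMem {F : Type*} [Field F] {Φ : Set (F →+* ℂ)}
    (hΦ : IsCMType F Φ) {ρ : F →+* ℂ} (hρ : ρ ∈ Φ) : (starRingEnd ℂ).comp ρ ∉ Φ :=
  ((hΦ _).resolve_left fun h => h.2 ⟨ρ, hρ, rfl⟩).2

section Embeddings

variable {F : Type*} [Field F] [Algebra ℚ F]

variable (F) in
def sigmaTildeAlgHom (σ : F →+* ℂ) : ℂ ⊗[ℚ] F →ₐ[ℂ] ℂ :=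
  Algebra.TensorProduct.lift (Algebra.ofId ℂ ℂ) σ.toRatAlgHom fun _ _ => .all _ _

@[simp]
theorem sigmaTilde_tmul (σ : F →+* ℂ) (z : ℂ) (x : F) : sigmaTilde F σ (z ⊗ₜ x) = z * σ x := rfl

theorem toLinearMap_sigmaTildeAlgHom (σ : F →+* ℂ) :
    (sigmaTildeAlgHom F σ).toLinearMap = sigmaTilde F σ := by
  ext x
  simp [sigmaTildeAlgHom]

theorem sigmaTilde_mul (σ : F →+* ℂ) (a b : ℂ ⊗[ℚ] F) :
    sigmaTilde F σ (a * b) = sigmaTilde F σ a * sigmaTilde F σ b := by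
  simp only [← toLinearMap_sigmaTildeAlgHom, AlgHom.toLinearMap_apply, map_mul]

theorem sigmaTilde_sigmaV (ρ : F →+* ℂ) (v : ℂ ⊗[ℚ] F) :
    sigmaTilde F ρ (sigmaV F v) = starRingEnd ℂ (sigmaTilde F ((starRingEnd ℂ).comp ρ) v) := by
  induction v using TensorProduct.induction_on with
  | zero => simp
  | tmul z x => simp
  | add a b ha hb => simp only [map_add, ha, hb]

theorem mem_UPhi_iff {Φ : Set (F →+* ℂ)} {v : ℂ ⊗[ℚ] F} :
    v ∈ UPhi F Φ ↔ ∀ σ : F →+* ℂ, σ ∉ Φ → sigmaTilde F σ v = 0 := by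
  simp [UPhi, Submodule.mem_iInf]

theorem mul_mem_UPhi {Φ : Set (F →+* ℂ)} (e : ℂ ⊗[ℚ] F) {v : ℂ ⊗[ℚ] F} (hv : v ∈ UPhi F Φ) :
    e * v ∈ UPhi F Φ :=
  mem_UPhi_iff.2 fun σ hσ => by rw [sigmaTilde_mul, mem_UPhi_iff.1 hv σ hσ, mul_zero]

theorem sigmaSub_UPhi (Φ : Set (F →+* ℂ)) :
    sigmaSub (UPhi F Φ) = UPhi F {ρ | (starRingEnd ℂ).comp ρ ∈ Φ} := by
  ext v
  constructor
  · rintro ⟨w, hw, rfl⟩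
    refine mem_UPhi_iff.2 fun ρ hρ => ?_
    rw [sigmaTilde_sigmaV, mem_UPhi_iff.1 hw _ hρ, map_zero]
  · intro hv
    refine ⟨sigmaV F v, mem_UPhi_iff.2 fun τ hτ => ?_, sigmaV_sigmaV v⟩
    have hconj : (starRingEnd ℂ).comp ((starRingEnd ℂ).comp τ) = τ :=
      RingHom.ext fun x => Complex.conj_conj (τ x)
    rw [sigmaTilde_sigmaV, mem_UPhi_iff.1 hv _ (by rwa [Set.mem_ofPred_eq, hconj]), map_zero]

end Embeddings

theorem map_mul_of_commutesWith_mulLeft {A : Type*} [Ring A] [Algebra ℚ A]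
    {P Q : Submodule ℂ (ℂ ⊗[ℚ] A)} (hP : ∀ e, ∀ u ∈ P, e * u ∈ P) (f : P →ₗ[ℂ] Q)
    (hf : ∀ x : A, CommutesWith P Q f (LinearMap.baseChange ℂ (LinearMap.mulLeft ℚ x)))
    (e : ℂ ⊗[ℚ] A) (u v : P) (hv : (v : ℂ ⊗[ℚ] A) = e * u) :
    (f v : ℂ ⊗[ℚ] A) = e * f u := by
  have hmaps : Q.subtype ∘ₗ f ∘ₗ (LinearMap.mulRight ℂ (u : ℂ ⊗[ℚ] A)).codRestrict P
      (fun e => hP e u u.2) = LinearMap.mulRight ℂ (f u : ℂ ⊗[ℚ] A) := by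
    ext x
    have hx := hf x u (by rw [LinearMap.baseChange_mulLeft]; exact hP _ u u.2)
    simp only [LinearMap.baseChange_mulLeft, LinearMap.mulLeft_apply] at hx
    exact hx
  obtain rfl : v = ⟨e * u, hP e u u.2⟩ := Subtype.ext hv
  exact LinearMap.congr_fun hmaps e

section NumberField

variable (F : Type*) [Field F] [NumberField F]

theorem linearIndependent_sigmaTilde : LinearIndependent ℂ (sigmaTilde F) := by
  have hinj : Function.Injective (sigmaTildeAlgHom F) := fun σ τ h => RingHom.ext fun x => by
    simpa [sigmaTildeAlgHom] using AlgHom.congr_fun h ((1 : ℂ) ⊗ₜ x)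
  simpa only [Function.comp_def, toLinearMap_sigmaTildeAlgHom] using
    (linearIndependent_toLinearMap ℂ (ℂ ⊗[ℚ] F) ℂ).comp _ hinj

theorem bijective_pi_sigmaTilde : Function.Bijective (LinearMap.pi (sigmaTilde F)) :=
  (linearIndependent_sigmaTilde F).bijective_pi_of_card_eq_finrank <| by
    rw [Module.finrank_baseChange, NumberField.Embeddings.card]

variable {F}

theorem eq_zero_of_forall_sigmaTilde_eq_zero {v : ℂ ⊗[ℚ] F}
    (h : ∀ σ : F →+* ℂ, sigmaTilde F σ v = 0) : v = 0 :=
  (bijective_pi_sigmaTilde F).injective (by ext σ; simpa using h σ)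

theorem exists_sigmaTilde_eq_one_and_mul_eq_zero (ρ : F →+* ℂ) :
    ∃ e : ℂ ⊗[ℚ] F, sigmaTilde F ρ e = 1 ∧ ∀ v, sigmaTilde F ρ v = 0 → e * v = 0 := by
  classical
  obtain ⟨e, he⟩ := (bijective_pi_sigmaTilde F).surjective (Pi.single ρ 1)
  have he' (σ : F →+* ℂ) : sigmaTilde F σ e = (Pi.single ρ 1 : (F →+* ℂ) → ℂ) σ := by
    simpa using congrFun he σ
  refine ⟨e, by simp [he'], fun v hv => eq_zero_of_forall_sigmaTilde_eq_zero fun σ => ?_⟩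
  rw [sigmaTilde_mul, he']
  obtain rfl | hσ := eq_or_ne σ ρ
  · rw [hv, mul_zero]
  · rw [Pi.single_eq_of_ne hσ, zero_mul]

end NumberField

theorem CMType_action_rigid_general
    (F : Type*) [Field F] [NumberField F]
    (Φ : Set (F →+* ℂ)) (hΦ : IsCMType F Φ) :
    ∀ f : sigmaSub (UPhi F Φ) →ₗ[ℂ] UPhi F Φ,
      (∀ x : F, CommutesWith (sigmaSub (UPhi F Φ)) (UPhi F Φ) f
        (LinearMap.baseChange ℂ (LinearMap.mulLeft ℚ x))) → f = 0 := by
  intro f hf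
  have hP : ∀ e, ∀ u ∈ sigmaSub (UPhi F Φ), e * u ∈ sigmaSub (UPhi F Φ) := by
    simpa only [sigmaSub_UPhi] using fun e u => mul_mem_UPhi e
  ext u : 2
  refine eq_zero_of_forall_sigmaTilde_eq_zero fun ρ => ?_
  by_cases hρ : ρ ∈ Φ
  · obtain ⟨e, he₁, he₀⟩ := exists_sigmaTilde_eq_one_and_mul_eq_zero ρ
    have hu : sigmaTilde F ρ u = 0 :=
      mem_UPhi_iff.1 (by rw [← sigmaSub_UPhi]; exact u.2) ρ (hΦ.starRingEnd_comp_notMem hρ)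
    have hfu : e * f u = 0 := by
      rw [← map_mul_of_commutesWith_mulLeft hP f hf e u 0 (by simp [he₀ _ hu]), map_zero,
        Submodule.coe_zero]
    simpa [sigmaTilde_mul, he₁] using congrArg (sigmaTilde F ρ) hfu
  · exact mem_UPhi_iff.1 (f u).2 ρ hρ

/-- The action of a totally imaginary number field `F` on the Hodge structure
`(F, U_Φ)` associated with a CM-type `Φ` is rigid: the only `ℂ`-linear map
`σ(U_Φ) → U_Φ` commuting with multiplication by every element of `F` is zero. -/
theorem CMType_action_rigid
    (F : Type*) [Field F] [NumberField F]
    (hF : IsTotallyImaginary F) (Φ : Set (F →+* ℂ)) (hΦ : IsCMType F Φ) :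
    ∀ f : sigmaSub (UPhi F Φ) →ₗ[ℂ] UPhi F Φ,
      (∀ x : F, CommutesWith (sigmaSub (UPhi F Φ)) (UPhi F Φ) f
        (LinearMap.baseChange ℂ (LinearMap.mulLeft ℚ x))) → f = 0 :=
  CMType_action_rigid_general F Φ hΦ

end
end

section
/- Let G be a finite group acting ℚ-linearly on a finite-dimensional ℚ-vector space V, and let U be a G-invariant ℂ-subspace of V ⊗_ℚ ℂ such that V ⊗_ℚ ℂ is the internal direct sum of U and σ(U). Extend the action to the group algebra ℚ[G] acting on V and, ℂ-linearly, on V ⊗_ℚ ℂ. Then the only ℂ-linear map σ(U) → U commuting with the action of every element of G is zero if and only if the only ℂ-linear map σ(U) → U commuting with the action of every element of the center Z(ℚ[G]) is zero. -/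
/-!
If no nonzero `G`-map `σ(U) → U` exists, the annihilators of `σ(U)` and `U` in the semisimple
algebra `ℂ[G]` are comaximal, so some `b ∈ ℂ[G]` acts as `1` on `σ(U)` and as `0` on `U`.
Averaging `b` over conjugation keeps this property and produces a `ℂ`-combination of class sums,
which come from `Z(ℚ[G])`; a map `σ(U) → U` commuting with `Z(ℚ[G])` therefore commutes with an
operator that is the identity on its source and zero on its target, so it vanishes. Conversely,
`ℚ[G]` is spanned by `G`.
-/

open scoped TensorProduct

noncomputable section

open scoped MonoidAlgebra

namespace MonoidAlgebra

variable (k : Type*) {G : Type*} [CommSemiring k] [Group G] [Fintype G]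

def classSum (h : G) : k[G] := ∑ g, single (g * h * g⁻¹) 1

variable {k}

theorem single_mul_classSum (a h : G) (r : k) :
    single a r * classSum k h = classSum k h * single a r := by
  simp only [classSum, Finset.mul_sum, Finset.sum_mul, single_mul_single, mul_one, one_mul]
  refine Fintype.sum_bijective (a * ·) (Group.mulLeft_bijective a) _ _ fun g ↦ ?_
  congr 1
  group

theorem classSum_mem_center (h : G) : classSum k h ∈ Subalgebra.center k k[G] := by
  rw [Subalgebra.mem_center_iff]
  intro w
  induction w using MonoidAlgebra.induction_linear with
  | zero => simp
  | add x y hx hy => rw [add_mul, mul_add, hx, hy]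
  | single a r => exact single_mul_classSum a h r

theorem sum_single_mul_mul_single_inv (b : k[G]) :
    ∑ g, single g 1 * b * single g⁻¹ 1 = ∑ h, b.coeff h • classSum k h := by
  have hb : b = ∑ h, single h (b.coeff h) := by
    conv_lhs => rw [← sum_coeff_single b]
    exact Finsupp.sum_fintype _ _ fun _ ↦ single_zero _
  conv_lhs => rw [hb]
  simp only [classSum, Finset.mul_sum, Finset.sum_mul, Finset.smul_sum, single_mul_single,
    smul_single, one_mul, mul_one, smul_eq_mul]
  exact Finset.sum_comm

end MonoidAlgebra

namespace Module

variable {A M N : Type*} [Ring A] [AddCommGroup M] [Module A M] [AddCommGroup N] [Module A N]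

theorem exists_linearMap_ne_zero_of_not_le_annihilator {c : Submodule A A}
    (hc : ¬ c ≤ annihilator A M) : ∃ φ : c →ₗ[A] M, φ ≠ 0 := by
  obtain ⟨a, hac, ha⟩ := SetLike.not_le_iff_exists.mp hc
  obtain ⟨x, hx⟩ : ∃ x : M, a • x ≠ 0 := by simpa [mem_annihilator] using ha
  exact ⟨LinearMap.toSpanSingleton A M x ∘ₗ c.subtype, fun h ↦ hx (LinearMap.congr_fun h ⟨a, hac⟩)⟩

/-- A simple left ideal `c` complementary to a maximal left ideal containing both annihilators
embeds into `M` and maps nontrivially to `N`; injectivity of `N` extends the latter map to `M`. -/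
theorem annihilator_sup_annihilator_eq_top [IsSemisimpleRing A] (h : ∀ F : M →ₗ[A] N, F = 0) :
    annihilator A M ⊔ annihilator A N = ⊤ := by
  by_contra hne
  obtain ⟨m, hm, hle⟩ := Ideal.exists_le_maximal _ hne
  obtain ⟨c, hc⟩ := exists_isCompl (m : Submodule A A)
  have hcatom : IsAtom c := hc.isCoatom_iff_isAtom.mp hm.out
  have : IsSimpleModule A c := isSimpleModule_iff_isAtom.mpr hcatom
  have hnot : ∀ I : Ideal A, I ≤ m → ¬ c ≤ I := fun I hI hcI ↦
    hcatom.1 (hc.disjoint.symm.eq_bot_of_le (hcI.trans hI))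
  obtain ⟨ψ, hψ⟩ := exists_linearMap_ne_zero_of_not_le_annihilator (hnot _ (le_sup_left.trans hle))
  obtain ⟨φ, hφ⟩ := exists_linearMap_ne_zero_of_not_le_annihilator
    (M := N) (hnot _ (le_sup_right.trans hle))
  obtain ⟨F, hF⟩ :=
    IsSemisimpleModule.extension_property ψ (ψ.injective_or_eq_zero.resolve_right hψ) φ
  exact hφ (by rw [← hF, h F, LinearMap.zero_comp])

end Module

namespace Representation

section CommRing

variable {k G V W : Type*} [CommRing k] [AddCommGroup V] [Module k V] [AddCommGroup W] [Module k W]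

instance [Monoid G] (ρ : Representation k G V) : AddCommGroup ρ.asModule :=
  inferInstanceAs (AddCommGroup V)

def baseChange [Monoid G] (A : Type*) [CommRing A] [Algebra k A] (ρ : Representation k G V) :
    Representation A G (A ⊗[k] V) :=
  (Module.End.baseChangeHom k A V).toMonoidHom.comp ρ

theorem mem_annihilator_asModule_iff [Monoid G] (ρ : Representation k G V) (a : k[G]) :
    a ∈ Module.annihilator k[G] ρ.asModule ↔ ρ.asAlgebraHom a = 0 := by
  rw [Module.mem_annihilator, LinearMap.ext_iff]
  rfl

theorem exists_asAlgebraHom_eq_one_and_eq_zero [Monoid G] [IsSemisimpleRing k[G]]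
    (ρ : Representation k G V) (π : Representation k G W) (h : ∀ f : IntertwiningMap ρ π, f = 0) :
    ∃ b : k[G], ρ.asAlgebraHom b = 1 ∧ π.asAlgebraHom b = 0 := by
  have hmod (F : ρ.asModule →ₗ[k[G]] π.asModule) : F = 0 := by
    simpa using congrArg (IntertwiningMap.equivLinearMapAsModule ρ π)
      (h ((IntertwiningMap.equivLinearMapAsModule ρ π).symm F))
  have hone : (1 : k[G]) ∈
      Module.annihilator k[G] ρ.asModule ⊔ Module.annihilator k[G] π.asModule := by
    rw [Module.annihilator_sup_annihilator_eq_top hmod]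
    exact Submodule.mem_top
  obtain ⟨a, ha, b, hb, hab⟩ := Submodule.mem_sup.mp hone
  rw [mem_annihilator_asModule_iff] at ha hb
  refine ⟨b, ?_, hb⟩
  rw [← zero_add (ρ.asAlgebraHom b), ← ha, ← map_add, hab, map_one]

variable [Group G] [Fintype G]

theorem asAlgebraHom_classSum (ρ : Representation k G V) (h : G) :
    ρ.asAlgebraHom (MonoidAlgebra.classSum k h) = ∑ g, ρ (g * h * g⁻¹) := by
  simp [MonoidAlgebra.classSum]

theorem asAlgebraHom_sum_single_mul_mul_single_inv (ρ : Representation k G V) (b : k[G]) :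
    ρ.asAlgebraHom (∑ g, MonoidAlgebra.single g 1 * b * MonoidAlgebra.single g⁻¹ 1) =
      ∑ g, ρ g * ρ.asAlgebraHom b * ρ g⁻¹ := by
  simp only [map_sum, map_mul, asAlgebraHom_single_one]

theorem baseChange_asAlgebraHom_classSum (A : Type*) [CommRing A] [Algebra k A]
    (ρ : Representation k G V) (h : G) :
    (ρ.baseChange A).asAlgebraHom (MonoidAlgebra.classSum A h) =
      (ρ.asAlgebraHom (MonoidAlgebra.classSum k h)).baseChange A := by
  rw [asAlgebraHom_classSum, asAlgebraHom_classSum]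
  exact (map_sum (Module.End.baseChangeHom k A V) _ _).symm

end CommRing

variable {k G V W : Type*} [Field k] [Group G] [Fintype G] [NeZero (Fintype.card G : k)]
  [AddCommGroup V] [Module k V] [AddCommGroup W] [Module k W]

/-- Averaging the element of `exists_asAlgebraHom_eq_one_and_eq_zero` over conjugation keeps its
actions `1` and `0` and lands in the span of the class sums. -/
theorem exists_mem_span_classSum_asAlgebraHom_eq_one_and_eq_zero
    (ρ : Representation k G V) (π : Representation k G W) (h : ∀ f : IntertwiningMap ρ π, f = 0) :
    ∃ z ∈ Submodule.span k (Set.range (MonoidAlgebra.classSum k (G := G))),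
      ρ.asAlgebraHom z = 1 ∧ π.asAlgebraHom z = 0 := by
  have : NeZero (Nat.card G : k) := by rwa [Nat.card_eq_fintype_card]
  obtain ⟨b, hρ, hπ⟩ := exists_asAlgebraHom_eq_one_and_eq_zero ρ π h
  refine ⟨(Fintype.card G : k)⁻¹ •
    ∑ g, MonoidAlgebra.single g 1 * b * MonoidAlgebra.single g⁻¹ 1, ?_, ?_, ?_⟩
  · rw [MonoidAlgebra.sum_single_mul_mul_single_inv]
    exact Submodule.smul_mem _ _ <| Submodule.sum_mem _ fun h _ ↦
      Submodule.smul_mem _ _ <| Submodule.subset_span ⟨h, rfl⟩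
  · rw [map_smul, asAlgebraHom_sum_single_mul_mul_single_inv, hρ]
    simp [← map_mul, Finset.card_univ, ← Nat.cast_smul_eq_nsmul k, smul_smul,
      inv_mul_cancel₀ (NeZero.ne (Fintype.card G : k))]
  · rw [map_smul, asAlgebraHom_sum_single_mul_mul_single_inv, hπ]
    simp

end Representation

namespace Subrepresentation

variable {k G W : Type*} [CommRing k] [Monoid G] [AddCommGroup W] [Module k W]
  {ρ : Representation k G W}

theorem coe_asAlgebraHom_toRepresentation_apply (P : Subrepresentation ρ) (a : k[G])
    (x : P.toSubmodule) : (P.toRepresentation.asAlgebraHom a x : W) = ρ.asAlgebraHom a x := by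
  induction a using MonoidAlgebra.induction_linear with
  | zero => simp
  | add a b ha hb => simp [ha, hb]
  | single g r => simp [toRepresentation]

end Subrepresentation

section ComplexSubspaces

variable {V : Type*} [AddCommGroup V] [Module ℚ V]

theorem sigmaV_baseChange (φ : Module.End ℚ V) (x : ℂ ⊗[ℚ] V) :
    sigmaV V (φ.baseChange ℂ x) = φ.baseChange ℂ (sigmaV V x) := by
  induction x using TensorProduct.induction_on with
  | zero => simp
  | tmul z v => rfl
  | add a b ha hb => simp only [map_add, ha, hb]

theorem baseChange_mem_sigmaSub {U : Submodule ℂ (ℂ ⊗[ℚ] V)} {φ : Module.End ℚ V}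
    (hU : ∀ x ∈ U, φ.baseChange ℂ x ∈ U) {x : ℂ ⊗[ℚ] V} (hx : x ∈ sigmaSub U) :
    φ.baseChange ℂ x ∈ sigmaSub U := by
  obtain ⟨u, hu, rfl⟩ := hx
  exact sigmaV_baseChange φ u ▸ Submodule.mem_map_of_mem (hU u hu)

variable {P Q : Submodule ℂ (ℂ ⊗[ℚ] V)}

/-- Preserving `P` is what makes `CommutesWith P Q f` closed under addition. -/
def commutingOps (f : P →ₗ[ℂ] Q) : Submodule ℂ (Module.End ℂ (ℂ ⊗[ℚ] V)) where
  carrier := {T | (∀ x ∈ P, T x ∈ P) ∧ CommutesWith P Q f T}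
  zero_mem' := ⟨fun _ _ ↦ P.zero_mem, fun x hx ↦ by
    rw [show (⟨(0 : Module.End ℂ _) x, hx⟩ : P) = 0 from rfl, map_zero]
    rfl⟩
  add_mem' {T₁ T₂} h₁ h₂ := by
    refine ⟨fun x hx ↦ P.add_mem (h₁.1 x hx) (h₂.1 x hx), fun x hx ↦ ?_⟩
    have hsplit : (⟨(T₁ + T₂) x, hx⟩ : P) = ⟨T₁ x, h₁.1 x x.2⟩ + ⟨T₂ x, h₂.1 x x.2⟩ := rfl
    rw [hsplit, map_add, Submodule.coe_add, h₁.2 x, h₂.2 x]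
    rfl
  smul_mem' c T h := by
    refine ⟨fun x hx ↦ P.smul_mem c (h.1 x hx), fun x hx ↦ ?_⟩
    have hsplit : (⟨(c • T) x, hx⟩ : P) = c • ⟨T x, h.1 x x.2⟩ := rfl
    rw [hsplit, map_smul, Submodule.coe_smul, h.2 x]
    rfl

theorem CommutesWith.eq_zero {f : P →ₗ[ℂ] Q} {T : Module.End ℂ (ℂ ⊗[ℚ] V)}
    (hf : CommutesWith P Q f T) (hP : ∀ x ∈ P, T x = x) (hQ : ∀ y ∈ Q, T y = 0) : f = 0 := by
  ext x
  have hx : T x = x := hP x x.2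
  have hTx : T x ∈ P := by rw [hx]; exact x.2
  have hcomm := hf x hTx
  rw [show (⟨T x, hTx⟩ : P) = x from Subtype.ext hx, hQ _ (f x).2] at hcomm
  simpa using hcomm

variable {G : Type*} [Group G] (ρ : Representation ℚ G V) {f : P →ₗ[ℂ] Q}

theorem baseChange_asAlgebraHom_mem_commutingOps
    (hP : ∀ g : G, ∀ x ∈ P, (ρ g).baseChange ℂ x ∈ P)
    (hf : ∀ g : G, CommutesWith P Q f ((ρ g).baseChange ℂ)) (a : ℚ[G]) :
    (ρ.asAlgebraHom a).baseChange ℂ ∈ commutingOps f := by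
  induction a using MonoidAlgebra.induction_linear with
  | zero => simp
  | add a b ha hb => simpa [LinearMap.baseChange_add] using (commutingOps f).add_mem ha hb
  | single g r =>
    rw [Representation.asAlgebraHom_single, LinearMap.baseChange_smul]
    exact Submodule.smul_of_tower_mem _ r ⟨hP g, hf g⟩

theorem asAlgebraHom_mem_commutingOps_of_mem_span_classSum [Fintype G]
    (hP : ∀ g : G, ∀ x ∈ P, (ρ g).baseChange ℂ x ∈ P)
    (hf : ∀ h : G, CommutesWith P Q f
      ((ρ.asAlgebraHom (MonoidAlgebra.classSum ℚ h)).baseChange ℂ))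
    {z : ℂ[G]} (hz : z ∈ Submodule.span ℂ (Set.range (MonoidAlgebra.classSum ℂ (G := G)))) :
    (ρ.baseChange ℂ).asAlgebraHom z ∈ commutingOps f := by
  refine (Submodule.span_le (p := (commutingOps f).comap
    (ρ.baseChange ℂ).asAlgebraHom.toLinearMap)).mpr (Set.range_subset_iff.mpr fun h ↦ ?_) hz
  rw [SetLike.mem_coe, Submodule.mem_comap, AlgHom.toLinearMap_apply]
  refine ⟨fun x hx ↦ ?_, Representation.baseChange_asAlgebraHom_classSum ℂ ρ h ▸ hf h⟩
  rw [Representation.asAlgebraHom_classSum, LinearMap.sum_apply]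
  exact P.sum_mem fun g _ ↦ hP _ x hx

end ComplexSubspaces

theorem rigid_iff_center_rigid_general
    (G : Type*) [Group G] [Finite G]
    (V : Type*) [AddCommGroup V] [Module ℚ V]
    (ρ : Representation ℚ G V)
    (U : Submodule ℂ (ℂ ⊗[ℚ] V))
    (hinv : ∀ g : G, ∀ x ∈ U, LinearMap.baseChange ℂ (ρ g) x ∈ U) :
    (∀ f : sigmaSub U →ₗ[ℂ] U,
        (∀ g : G, CommutesWith (sigmaSub U) U f (LinearMap.baseChange ℂ (ρ g))) →
          f = 0) ↔
      (∀ f : sigmaSub U →ₗ[ℂ] U,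
        (∀ z ∈ Subalgebra.center ℚ (MonoidAlgebra ℚ G),
          CommutesWith (sigmaSub U) U f
            (LinearMap.baseChange ℂ (ρ.asAlgebraHom z))) → f = 0) := by
  have hσ (g : G) : ∀ x ∈ sigmaSub U, (ρ g).baseChange ℂ x ∈ sigmaSub U :=
    fun _ ↦ baseChange_mem_sigmaSub (hinv g)
  refine ⟨fun hG f hZ ↦ ?_, fun hZ f hG ↦
    hZ f fun z _ ↦ (baseChange_asAlgebraHom_mem_commutingOps ρ hσ hG z).2⟩
  let _ := Fintype.ofFinite G
  let Pσ : Subrepresentation (ρ.baseChange ℂ) := ⟨sigmaSub U, fun g _ ↦ hσ g _⟩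
  let PU : Subrepresentation (ρ.baseChange ℂ) := ⟨U, fun g _ ↦ hinv g _⟩
  have hrigid (F : Representation.IntertwiningMap Pσ.toRepresentation PU.toRepresentation) :
      F = 0 :=
    Representation.IntertwiningMap.ext <| hG F.toLinearMap fun g x _ ↦
      congrArg Subtype.val (LinearMap.congr_fun (F.isIntertwining' g) x)
  obtain ⟨z, hz, hzσ, hzU⟩ :=
    Representation.exists_mem_span_classSum_asAlgebraHom_eq_one_and_eq_zero _ _ hrigid
  have hcomm := asAlgebraHom_mem_commutingOps_of_mem_span_classSum ρ hσ
    (fun h ↦ hZ _ (MonoidAlgebra.classSum_mem_center h)) hz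
  refine hcomm.2.eq_zero (fun x hx ↦ ?_) (fun y hy ↦ ?_)
  · rw [← Pσ.coe_asAlgebraHom_toRepresentation_apply z ⟨x, hx⟩, hzσ]
    rfl
  · rw [← PU.coe_asAlgebraHom_toRepresentation_apply z ⟨y, hy⟩, hzU]
    rfl

/-- Rigidity of a finite group action on a weight-one rational Hodge structure is
equivalent to rigidity of the action of the center of the group algebra `ℚ[G]`. -/
theorem rigid_iff_center_rigid
    (G : Type*) [Group G] [Finite G]
    (V : Type*) [AddCommGroup V] [Module ℚ V] [FiniteDimensional ℚ V]
    (ρ : Representation ℚ G V)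
    (U : Submodule ℂ (ℂ ⊗[ℚ] V))
    (hinv : ∀ g : G, ∀ x ∈ U, LinearMap.baseChange ℂ (ρ g) x ∈ U)
    (hcompl : IsCompl U (sigmaSub U)) :
    (∀ f : sigmaSub U →ₗ[ℂ] U,
        (∀ g : G, CommutesWith (sigmaSub U) U f (LinearMap.baseChange ℂ (ρ g))) →
          f = 0) ↔
      (∀ f : sigmaSub U →ₗ[ℂ] U,
        (∀ z ∈ Subalgebra.center ℚ (MonoidAlgebra ℚ G),
          CommutesWith (sigmaSub U) U f
            (LinearMap.baseChange ℂ (ρ.asAlgebraHom z))) → f = 0) :=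
  rigid_iff_center_rigid_general G V ρ U hinv
end
end

section
/- Let 𝒜 be a commutative semisimple finite-dimensional ℚ-algebra acting on a finite-dimensional ℚ-vector space V (i.e., V is an 𝒜-module), and let U be a ℂ-subspace of V ⊗_ℚ ℂ invariant under the ℂ-linear extension of the 𝒜-action, such that V ⊗_ℚ ℂ is the internal direct sum of U and σ(U). For each ℚ-algebra homomorphism τ : 𝒜 → ℂ, let V_τ := {v ∈ V ⊗_ℚ ℂ : a·v = τ(a)·v for all a ∈ 𝒜}. Then the only ℂ-linear map σ(U) → U commuting with the action of every element of 𝒜 is the zero map if and only if for every ℚ-algebra homomorphism τ : 𝒜 → ℂ at least one of the subspaces U ∩ V_τ and σ(U) ∩ V_τ is zero. -/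
open scoped TensorProduct

noncomputable section

/-- Scalar multiplication by `a : 𝒜` as a `ℚ`-linear endomorphism of `V`. -/
def smulLin (𝒜 : Type*) [CommRing 𝒜] [Algebra ℚ 𝒜]
    (V : Type*) [AddCommGroup V] [Module ℚ V] [Module 𝒜 V] [IsScalarTower ℚ 𝒜 V]
    (a : 𝒜) : V →ₗ[ℚ] V where
  toFun v := a • v
  map_add' := smul_add a
  map_smul' q v := smul_comm a q v

/-- The `τ`-eigenspace of the `𝒜`-action on `ℂ ⊗[ℚ] V`: the subspace of vectors on
which every `a : 𝒜` acts as multiplication by `τ(a)`. -/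
def eigenspaceOf (𝒜 : Type*) [CommRing 𝒜] [Algebra ℚ 𝒜]
    (V : Type*) [AddCommGroup V] [Module ℚ V] [Module 𝒜 V] [IsScalarTower ℚ 𝒜 V]
    (τ : 𝒜 →ₐ[ℚ] ℂ) : Submodule ℂ (ℂ ⊗[ℚ] V) :=
  ⨅ a : 𝒜, LinearMap.ker
    (LinearMap.baseChange ℂ (smulLin 𝒜 V a) - τ a • LinearMap.id)

/-!
Since `ℚ` is perfect, `B = ℂ ⊗[ℚ] 𝒜` is again semisimple, so each character `χ` of `B` (these are
the `ℂ`-linear extensions of the `τ : 𝒜 →ₐ[ℚ] ℂ`) has an idempotent `e` with `b * e = χ b • e` and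
`χ e = 1`: acting by `e` projects onto the `τ`-eigenspace, and every nonzero vector survives one
of these projections. If `f : σ(U) → U` is equivariant and `f x ≠ 0`, choose `e` with
`e • f x ≠ 0`; then `e • x ∈ σ(U) ∩ V_τ` and `f (e • x) = e • f x ∈ U ∩ V_τ` are both nonzero.
Conversely, nonzero `u ∈ U ∩ V_τ` and `w ∈ σ(U) ∩ V_τ` give the nonzero equivariant map
`x ↦ ψ (e • x) • u`, where `ψ w = 1`.
-/

attribute [local instance] IsArtinianRing.fieldOfSubtypeIsMaximal in
theorem Algebra.FormallyUnramified.of_isReduced_of_perfectField (K A : Type*) [Field K]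
    [PerfectField K] [CommRing A] [Algebra K A] [FiniteDimensional K A] [IsReduced A] :
    Algebra.FormallyUnramified K A := by
  have : IsArtinianRing A := .of_finite K A
  have (m : MaximalSpectrum A) : Algebra.FormallyUnramified K (A ⧸ m.asIdeal) :=
    .of_isSeparable K _
  exact (Algebra.FormallyUnramified.iff_of_equiv ((IsArtinianRing.equivPi A).restrictScalars K)).mpr
    ((Algebra.FormallyUnramified.pi_iff _).mpr this)

theorem isSemisimpleRing_tensorProduct (K L A : Type*) [Field K] [PerfectField K] [Field L]
    [Algebra K L] [CommRing A] [Algebra K A] [FiniteDimensional K A] [IsSemisimpleRing A] :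
    IsSemisimpleRing (L ⊗[K] A) := by
  have := Algebra.FormallyUnramified.of_isReduced_of_perfectField K A
  have : IsReduced (L ⊗[K] A) := Algebra.FormallyUnramified.isReduced_of_field L _
  have : IsArtinianRing (L ⊗[K] A) := .of_finite L _
  exact IsArtinianRing.isSemisimpleRing_of_isReduced _

theorem AlgHom.exists_apply_eq_one_and_mul_eq_smul {R B : Type*} [CommRing R] [CommRing B]
    [Algebra R B] [IsSemisimpleRing B] (χ : B →ₐ[R] R) :
    ∃ e : B, χ e = 1 ∧ ∀ b, b * e = χ b • e := by
  obtain ⟨f, hf, hker⟩ := IsSemisimpleRing.ideal_eq_span_idempotent (RingHom.ker χ)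
  have hχf : χ f = 0 := by
    rw [← RingHom.mem_ker, hker]; exact Ideal.mem_span_singleton_self f
  refine ⟨1 - f, by simp [hχf], fun b => ?_⟩
  have hb : b - algebraMap R B (χ b) ∈ Ideal.span {f} := by
    rw [← hker, RingHom.mem_ker]; simp
  obtain ⟨c, hc⟩ := Ideal.mem_span_singleton'.mp hb
  have hf' : f * f = f := hf.eq
  rw [Algebra.smul_def]
  linear_combination (1 - f) * hc.symm - c * hf'

theorem Ideal.IsMaximal.exists_algHom_le_ker {k B : Type*} [Field k] [IsAlgClosed k]
    [CommRing B] [Algebra k B] [Module.Finite k B] {m : Ideal B} (hm : m.IsMaximal) :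
    ∃ χ : B →ₐ[k] k, m ≤ RingHom.ker χ := by
  let := Ideal.Quotient.field m
  let ι : k ≃ₐ[k] B ⧸ m := .ofBijective (Algebra.ofId k _)
    IsAlgClosed.algebraMap_bijective_of_isIntegral
  exact ⟨(ι.symm : B ⧸ m →ₐ[k] k).comp (Ideal.Quotient.mkₐ k m), fun b hb => by
    simp [Ideal.Quotient.eq_zero_iff_mem.mpr hb]⟩

theorem exists_character_idempotent_apply_ne_zero {k B M : Type*} [Field k] [IsAlgClosed k]
    [CommRing B] [Algebra k B] [Module.Finite k B] [IsSemisimpleRing B]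
    [AddCommGroup M] [Module k M] (ρ : B →ₐ[k] Module.End k M) {y : M} (hy : y ≠ 0) :
    ∃ χ : B →ₐ[k] k, ∃ e : B, χ e = 1 ∧ (∀ b, b * e = χ b • e) ∧ ρ e y ≠ 0 := by
  let ann : Ideal B := .comap ρ (LinearMap.ker (LinearMap.toSpanSingleton _ M y))
  have hann : ann ≠ ⊤ := fun h => hy <| by
    simpa [ann] using (Ideal.eq_top_iff_one _).mp h
  obtain ⟨m, hm, hann_le⟩ := Ideal.exists_le_maximal ann hann
  obtain ⟨χ, hχ⟩ := hm.exists_algHom_le_ker (k := k)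
  obtain ⟨e, he1, he⟩ := χ.exists_apply_eq_one_and_mul_eq_smul
  refine ⟨χ, e, he1, he, fun hey => ?_⟩
  have : χ e = 0 := hχ (hann_le (by simpa [ann] using hey))
  simp [he1] at this

namespace CommutesWith

variable {V : Type*} [AddCommGroup V] [Module ℚ V] {P Q : Submodule ℂ (ℂ ⊗[ℚ] V)}
  {f : P →ₗ[ℂ] Q}

theorem zero : CommutesWith P Q f 0 := fun x hx => by
  rw [show (⟨_, hx⟩ : P) = 0 from rfl, map_zero]
  simp

theorem add {S T : Module.End ℂ (ℂ ⊗[ℚ] V)}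
    (hS : ∀ x ∈ P, S x ∈ P) (hT : ∀ x ∈ P, T x ∈ P)
    (h₁ : CommutesWith P Q f S) (h₂ : CommutesWith P Q f T) : CommutesWith P Q f (S + T) := by
  intro x hx
  have : (⟨(S + T) x, hx⟩ : P) = ⟨S x, hS x x.2⟩ + ⟨T x, hT x x.2⟩ := rfl
  rw [this, map_add, Submodule.coe_add, h₁, h₂]
  rfl

theorem smul {T : Module.End ℂ (ℂ ⊗[ℚ] V)}
    (hT : ∀ x ∈ P, T x ∈ P) (h : CommutesWith P Q f T) (c : ℂ) :
    CommutesWith P Q f (c • T) := by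
  intro x hx
  have : (⟨(c • T) x, hx⟩ : P) = c • ⟨T x, hT x x.2⟩ := rfl
  rw [this, map_smul, Submodule.coe_smul, h]
  rfl

end CommutesWith

section ComplexAction

variable {𝒜 : Type*} [CommRing 𝒜] [Algebra ℚ 𝒜]
  {V : Type*} [AddCommGroup V] [Module ℚ V] [Module 𝒜 V] [IsScalarTower ℚ 𝒜 V]

variable (𝒜 V) in
def complexAction : ℂ ⊗[ℚ] 𝒜 →ₐ[ℂ] Module.End ℂ (ℂ ⊗[ℚ] V) :=
  AlgHom.liftEquiv ℚ ℂ 𝒜 _ ((Module.End.baseChangeHom ℚ ℂ V).comp (Algebra.lsmul ℚ ℚ V))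

theorem complexAction_tmul (z : ℂ) (a : 𝒜) :
    complexAction 𝒜 V (z ⊗ₜ a) = z • LinearMap.baseChange ℂ (smulLin 𝒜 V a) :=
  rfl

theorem complexAction_one_tmul (a : 𝒜) :
    complexAction 𝒜 V (1 ⊗ₜ a) = LinearMap.baseChange ℂ (smulLin 𝒜 V a) := by
  rw [complexAction_tmul, one_smul]

theorem complexAction_mem {W : Submodule ℂ (ℂ ⊗[ℚ] V)}
    (hW : ∀ a : 𝒜, ∀ x ∈ W, LinearMap.baseChange ℂ (smulLin 𝒜 V a) x ∈ W)
    (b : ℂ ⊗[ℚ] 𝒜) {x : ℂ ⊗[ℚ] V} (hx : x ∈ W) : complexAction 𝒜 V b x ∈ W := by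
  induction b using TensorProduct.induction_on with
  | zero => simp
  | tmul z a => exact W.smul_mem z (hW a x hx)
  | add b c hb hc => simpa using W.add_mem hb hc

theorem mem_eigenspaceOf_iff {τ : 𝒜 →ₐ[ℚ] ℂ} {x : ℂ ⊗[ℚ] V} :
    x ∈ eigenspaceOf 𝒜 V τ ↔ ∀ a : 𝒜, LinearMap.baseChange ℂ (smulLin 𝒜 V a) x = τ a • x := by
  simp [eigenspaceOf, sub_eq_zero]

theorem complexAction_apply_of_mem_eigenspaceOf {τ : 𝒜 →ₐ[ℚ] ℂ} {x : ℂ ⊗[ℚ] V}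
    (hx : x ∈ eigenspaceOf 𝒜 V τ) (b : ℂ ⊗[ℚ] 𝒜) :
    complexAction 𝒜 V b x = AlgHom.liftEquiv ℚ ℂ 𝒜 ℂ τ b • x := by
  rw [mem_eigenspaceOf_iff] at hx
  induction b using TensorProduct.induction_on with
  | zero => simp
  | tmul z a => simp [complexAction_tmul, hx a, smul_smul]
  | add b c hb hc => simp [hb, hc, add_smul]

theorem complexAction_mem_eigenspaceOf {χ : ℂ ⊗[ℚ] 𝒜 →ₐ[ℂ] ℂ} {e : ℂ ⊗[ℚ] 𝒜}
    (he : ∀ b, b * e = χ b • e) (x : ℂ ⊗[ℚ] V) :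
    complexAction 𝒜 V e x ∈ eigenspaceOf 𝒜 V ((AlgHom.liftEquiv ℚ ℂ 𝒜 ℂ).symm χ) := by
  rw [mem_eigenspaceOf_iff]
  intro a
  rw [← complexAction_one_tmul, ← Module.End.mul_apply, ← map_mul, he, map_smul,
    AlgHom.liftEquiv_symm_apply, LinearMap.smul_apply]

theorem sigmaV_baseChange_smulLin (a : 𝒜) (x : ℂ ⊗[ℚ] V) :
    sigmaV V (LinearMap.baseChange ℂ (smulLin 𝒜 V a) x) =
      LinearMap.baseChange ℂ (smulLin 𝒜 V a) (sigmaV V x) := by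
  induction x using TensorProduct.induction_on with
  | zero => simp
  | tmul z v => rfl
  | add x y hx hy => simp only [map_add, hx, hy]

theorem baseChange_smulLin_mem_sigmaSub {U : Submodule ℂ (ℂ ⊗[ℚ] V)}
    (hU : ∀ a : 𝒜, ∀ x ∈ U, LinearMap.baseChange ℂ (smulLin 𝒜 V a) x ∈ U) (a : 𝒜) :
    ∀ x ∈ sigmaSub U, LinearMap.baseChange ℂ (smulLin 𝒜 V a) x ∈ sigmaSub U := by
  rintro _ ⟨u, hu, rfl⟩
  exact ⟨_, hU a u hu, sigmaV_baseChange_smulLin a u⟩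

theorem commutesWith_complexAction {P Q : Submodule ℂ (ℂ ⊗[ℚ] V)}
    (hP : ∀ a : 𝒜, ∀ x ∈ P, LinearMap.baseChange ℂ (smulLin 𝒜 V a) x ∈ P) {f : P →ₗ[ℂ] Q}
    (hf : ∀ a : 𝒜, CommutesWith P Q f (LinearMap.baseChange ℂ (smulLin 𝒜 V a)))
    (b : ℂ ⊗[ℚ] 𝒜) : CommutesWith P Q f (complexAction 𝒜 V b) := by
  induction b using TensorProduct.induction_on with
  | zero => rw [map_zero]; exact .zero
  | tmul z a => rw [complexAction_tmul]; exact (hf a).smul (hP a) z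
  | add b c hb hc =>
    rw [map_add]
    exact hb.add (fun _ => complexAction_mem hP b) (fun _ => complexAction_mem hP c) hc

theorem commutesWith_smulRight {P Q : Submodule ℂ (ℂ ⊗[ℚ] V)} {τ : 𝒜 →ₐ[ℚ] ℂ}
    {e : ℂ ⊗[ℚ] 𝒜} (he : ∀ b, b * e = AlgHom.liftEquiv ℚ ℂ 𝒜 ℂ τ b • e)
    (ψ : Module.Dual ℂ (ℂ ⊗[ℚ] V)) {u : Q} (hu : (u : ℂ ⊗[ℚ] V) ∈ eigenspaceOf 𝒜 V τ)
    (a : 𝒜) :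
    CommutesWith P Q ((ψ ∘ₗ complexAction 𝒜 V e ∘ₗ P.subtype).smulRight u)
      (LinearMap.baseChange ℂ (smulLin 𝒜 V a)) := by
  intro x hx
  have hex : complexAction 𝒜 V e (LinearMap.baseChange ℂ (smulLin 𝒜 V a) x) =
      τ a • complexAction 𝒜 V e x := by
    rw [← complexAction_one_tmul, ← Module.End.mul_apply, ← map_mul, mul_comm, he, map_smul,
      AlgHom.liftEquiv_tmul, one_smul, LinearMap.smul_apply]
  simp [hex, mem_eigenspaceOf_iff.mp hu a, smul_smul, mul_comm]

end ComplexAction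

theorem rigid_iff_eigenspaces_separated_general
    (𝒜 : Type*) [CommRing 𝒜] [Algebra ℚ 𝒜] [FiniteDimensional ℚ 𝒜] [IsSemisimpleRing 𝒜]
    (V : Type*) [AddCommGroup V] [Module ℚ V]
    [Module 𝒜 V] [IsScalarTower ℚ 𝒜 V]
    (U : Submodule ℂ (ℂ ⊗[ℚ] V))
    (hinv : ∀ a : 𝒜, ∀ x ∈ U, LinearMap.baseChange ℂ (smulLin 𝒜 V a) x ∈ U) :
    (∀ f : sigmaSub U →ₗ[ℂ] U,
        (∀ a : 𝒜, CommutesWith (sigmaSub U) U f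
          (LinearMap.baseChange ℂ (smulLin 𝒜 V a))) → f = 0) ↔
      (∀ τ : 𝒜 →ₐ[ℚ] ℂ,
        U ⊓ eigenspaceOf 𝒜 V τ = ⊥ ∨ sigmaSub U ⊓ eigenspaceOf 𝒜 V τ = ⊥) := by
  have := isSemisimpleRing_tensorProduct ℚ ℂ 𝒜
  have hσU := baseChange_smulLin_mem_sigmaSub hinv
  constructor
  · intro hrigid τ
    by_contra! ⟨hU, hσ⟩
    obtain ⟨u, ⟨huU, huτ⟩, hu⟩ := (Submodule.ne_bot_iff _).mp hU
    obtain ⟨w, ⟨hwσ, hwτ⟩, hw⟩ := (Submodule.ne_bot_iff _).mp hσ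
    obtain ⟨e, he1, he⟩ := (AlgHom.liftEquiv ℚ ℂ 𝒜 ℂ τ).exists_apply_eq_one_and_mul_eq_smul
    obtain ⟨ψ, hψ⟩ := Module.Projective.exists_dual_eq_one ℂ hw
    have hf := hrigid _ (commutesWith_smulRight (P := sigmaSub U) he ψ (u := ⟨u, huU⟩) huτ)
    have hfw := congr($hf ⟨w, hwσ⟩)
    simp [complexAction_apply_of_mem_eigenspaceOf hwτ, he1, hψ] at hfw
    exact hu hfw
  · intro hsep f hf
    ext x
    by_contra hy
    obtain ⟨χ, e, -, he, hey⟩ := exists_character_idempotent_apply_ne_zero (complexAction 𝒜 V) hy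
    have hfe := commutesWith_complexAction hσU hf e x (complexAction_mem hσU e x.2)
    rcases hsep ((AlgHom.liftEquiv ℚ ℂ 𝒜 ℂ).symm χ) with h | h
    · exact hey <| (Submodule.eq_bot_iff _).mp h _
        ⟨complexAction_mem hinv e (f x).2, complexAction_mem_eigenspaceOf he _⟩
    · have hex := (Submodule.eq_bot_iff _).mp h _
        ⟨complexAction_mem hσU e x.2, complexAction_mem_eigenspaceOf he _⟩
      rw [show (⟨_, _⟩ : sigmaSub U) = 0 from Subtype.ext hex, map_zero] at hfe
      exact hey (by simpa using hfe.symm)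

/-- Rigidity of the action of a commutative semisimple `ℚ`-algebra `𝒜` on a weight-one
rational Hodge structure is equivalent to the condition that, for each `ℚ`-algebra
homomorphism `τ : 𝒜 → ℂ`, at least one of `U ∩ V_τ` and `σ(U) ∩ V_τ` vanishes. -/
theorem rigid_iff_eigenspaces_separated
    (𝒜 : Type*) [CommRing 𝒜] [Algebra ℚ 𝒜] [FiniteDimensional ℚ 𝒜] [IsSemisimpleRing 𝒜]
    (V : Type*) [AddCommGroup V] [Module ℚ V] [FiniteDimensional ℚ V]
    [Module 𝒜 V] [IsScalarTower ℚ 𝒜 V]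
    (U : Submodule ℂ (ℂ ⊗[ℚ] V))
    (hinv : ∀ a : 𝒜, ∀ x ∈ U, LinearMap.baseChange ℂ (smulLin 𝒜 V a) x ∈ U)
    (hcompl : IsCompl U (sigmaSub U)) :
    (∀ f : sigmaSub U →ₗ[ℂ] U,
        (∀ a : 𝒜, CommutesWith (sigmaSub U) U f
          (LinearMap.baseChange ℂ (smulLin 𝒜 V a))) → f = 0) ↔
      (∀ τ : 𝒜 →ₐ[ℚ] ℂ,
        U ⊓ eigenspaceOf 𝒜 V τ = ⊥ ∨ sigmaSub U ⊓ eigenspaceOf 𝒜 V τ = ⊥) :=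
  rigid_iff_eigenspaces_separated_general 𝒜 V U hinv

end
end
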